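/- arXiv:1406.3815 — 8 statements merged into one kernel-verified Lean document; each statement's English description precedes it below -/
import Mathlib

section
/- Let X be a complex Banach space which is a Grothendieck space and let T ∈ L(X). Then the Banach-space adjoint T* ∈ L(X*) is injective if and only if the triple adjoint T*** ∈ L(X***) is injective; that is, ker(T*) = {0} holds if and only if ker(T***) = {0} holds. -/
open Filter Topology Metric
open scoped ENNReal

noncomputable section

namespace JClassPaper

variable {X : Type*} [NormedAddCommGroup X] [NormedSpace ℂ X]

/-- The Banach-space adjoint `T* φ = φ ∘ T` of a bounded operator. -/
def adj (T : X →L[ℂ] X) : StrongDual ℂ X →L[ℂ] StrongDual ℂ X :=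
  (ContinuousLinearMap.compL ℂ X X ℂ).flip T

/-- The point spectrum (set of eigenvalues). -/
def pointSpectrum (T : X →L[ℂ] X) : Set ℂ := {z | ∃ x : X, x ≠ 0 ∧ T x = z • x}

/-- `T` is tauberian if `(T**)⁻¹(j_X(X)) ⊆ j_X(X)`. -/
def Tauberian (T : X →L[ℂ] X) : Prop :=
  ∀ F : StrongDual ℂ (StrongDual ℂ X),
    adj (adj T) F ∈ Set.range (NormedSpace.inclusionInDoubleDual ℂ X) →
      F ∈ Set.range (NormedSpace.inclusionInDoubleDual ℂ X)

/-- Fredholm: finite-dimensional kernel, closed range of finite codimension. -/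
def Fredholm (T : X →L[ℂ] X) : Prop :=
  FiniteDimensional ℂ (LinearMap.ker (T : X →ₗ[ℂ] X)) ∧ IsClosed (LinearMap.range (T : X →ₗ[ℂ] X) : Set X) ∧
    FiniteDimensional ℂ (X ⧸ LinearMap.range (T : X →ₗ[ℂ] X))

/-- The essential spectrum. -/
def essSpectrum (T : X →L[ℂ] X) : Set ℂ := {z | ¬ Fredholm (T - z • (1 : X →L[ℂ] X))}

/-- The J-set of `x` under `T`. -/
def JSet (T : X →L[ℂ] X) (x : X) : Set X :=
  {y | ∃ k : ℕ → ℕ, StrictMono k ∧ ∃ u : ℕ → X,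
    Tendsto u atTop (𝓝 x) ∧ Tendsto (fun n => (T ^ k n) (u n)) atTop (𝓝 y)}

/-- The mixing J-set of `x` under `T`. -/
def JMixSet (T : X →L[ℂ] X) (x : X) : Set X :=
  {y | ∃ u : ℕ → X, Tendsto u atTop (𝓝 x) ∧ Tendsto (fun n => (T ^ n) (u n)) atTop (𝓝 y)}

/-- `T` is J-class if `J_T(x) = X` for some `x ≠ 0`. -/
def JClass (T : X →L[ℂ] X) : Prop := ∃ x : X, x ≠ 0 ∧ JSet T x = Set.univ

/-- `T` is J^mix-class if `J^mix_T(x) = X` for some `x ≠ 0`. -/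
def JMixClass (T : X →L[ℂ] X) : Prop := ∃ x : X, x ≠ 0 ∧ JMixSet T x = Set.univ

/-- A Banach space is a Grothendieck space if weak*-null sequences in the dual are weakly null. -/
def Grothendieck (X : Type*) [NormedAddCommGroup X] [NormedSpace ℂ X] : Prop :=
  ∀ φ : ℕ → StrongDual ℂ X,
    (∀ x : X, Tendsto (fun n => φ n x) atTop (𝓝 (0 : ℂ))) →
    ∀ F : StrongDual ℂ (StrongDual ℂ X),
      Tendsto (fun n => F (φ n)) atTop (𝓝 (0 : ℂ))

/-- The surjectivity modulus `s(T) = sup {r ≥ 0 : T(B_X) ⊇ r·B_X}`. -/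
def smod (T : X →L[ℂ] X) : ℝ :=
  sSup {r : ℝ | 0 ≤ r ∧ closedBall (0 : X) r ⊆ T '' closedBall 0 1}

/-- `δ(T) = lim_n s(Tⁿ)^{1/n} = sup_n s(Tⁿ)^{1/n}` (by supermultiplicativity of `s`). -/
def dmod (T : X →L[ℂ] X) : ℝ := ⨆ n : ℕ, smod (T ^ (n + 1)) ^ ((1 : ℝ) / (n + 1))

/-- The injectivity modulus `κ(T) = inf {‖Tx‖ : ‖x‖ = 1}`. -/
def kmod (T : X →L[ℂ] X) : ℝ := sInf {r : ℝ | ∃ x : X, ‖x‖ = 1 ∧ r = ‖T x‖}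

/-- `i(T) = lim_n κ(Tⁿ)^{1/n} = sup_n κ(Tⁿ)^{1/n}` (by supermultiplicativity of `κ`). -/
def imod (T : X →L[ℂ] X) : ℝ := ⨆ n : ℕ, kmod (T ^ (n + 1)) ^ ((1 : ℝ) / (n + 1))

/-- The space `l∞` of bounded complex sequences. -/
abbrev linf := lp (fun _ : ℕ => ℂ) ∞

/-- The space `l¹` of absolutely summable complex sequences. -/
abbrev lone := lp (fun _ : ℕ => ℂ) 1

/-- `T ∈ L(l∞)` is the adjoint of `S ∈ L(l¹)`: `⟪Tx, y⟫ = ⟪x, Sy⟫` for all `x, y`. -/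
def IsAdjointOf (T : linf →L[ℂ] linf) (S : lone →L[ℂ] lone) : Prop :=
  ∀ (x : linf) (y : lone), ∑' n, (T x) n * y n = ∑' n, x n * (S y) n

/-- `c₀`, the subspace of `l∞` of null sequences. -/
def c0 : Submodule ℂ linf where
  carrier := {x | Tendsto (fun n => x n) atTop (𝓝 (0 : ℂ))}
  add_mem' := by
    intro a b ha hb
    have h := ha.add hb
    simp only [Set.mem_setOf_eq] at *
    simpa [lp.coeFn_add, Pi.add_apply] using h
  zero_mem' := by
    simp only [Set.mem_setOf_eq]
    simpa [lp.coeFn_zero] using (tendsto_const_nhds : Tendsto (fun _ : ℕ => (0:ℂ)) atTop (𝓝 0))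
  smul_mem' := by
    intro c a ha
    simp only [Set.mem_setOf_eq] at *
    have h := ha.const_mul c
    simpa [lp.coeFn_smul, Pi.smul_apply, smul_eq_mul] using h

/-!
Injectivity of `T*` means that `T` has dense range, and injectivity always passes from `T***` to
`T*` through the canonical embedding `X* → X***`. Conversely, let `Ψ ∈ ker T***` and `Ψ F ≠ 0`.
Since `Ψ` annihilates the range of `T**`, a Hahn–Banach separation in `ℂ × X*` (a Goldstine-type
argument) yields a bounded sequence `φₙ` in `X*` with `F φₙ → Ψ F` and `T* φₙ → 0`. Being bounded
and null on the dense range of `T`, the sequence `φₙ` is weak*-null, hence weakly null because `X`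
is a Grothendieck space; so `F φₙ → 0`, contradicting `Ψ F ≠ 0`.
-/

open RCLike

section

variable {𝕜 E F : Type*} [RCLike 𝕜] [NormedAddCommGroup E] [NormedSpace 𝕜 E]
  [NormedAddCommGroup F] [NormedSpace 𝕜 F]

theorem denseRange_of_comp_eq_zero {T : E →L[𝕜] F}
    (hT : ∀ φ : StrongDual 𝕜 F, φ.comp T = 0 → φ = 0) : DenseRange T := by
  set M := (LinearMap.range (T : E →ₗ[𝕜] F)).topologicalClosure
  have : IsClosed (M : Set F) := Submodule.isClosed_topologicalClosure _
  rw [DenseRange, dense_iff_closure_eq, Set.eq_univ_iff_forall]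
  intro y
  by_contra hy
  have hy' : M.mkQ y ≠ 0 := by
    rwa [ne_eq, Submodule.mkQ_apply, Submodule.Quotient.mk_eq_zero]
  obtain ⟨f, hf⟩ := SeparatingDual.exists_ne_zero (R := 𝕜) hy'
  have hfT : (f.comp M.mkQL).comp T = 0 := by
    ext x
    have hTx : T x ∈ M := Submodule.le_topologicalClosure _ (LinearMap.mem_range_self _ x)
    simp [(Submodule.Quotient.mk_eq_zero M).2 hTx]
  exact hf (by simpa using congr($(hT _ hfT) y))

theorem tendsto_apply_zero_of_tendsto_comp {ι : Type*} {l : Filter ι} {T : E →L[𝕜] F}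
    (hT : DenseRange T) {φ : ι → StrongDual 𝕜 F} {C : ℝ} (hC : ∀ i, ‖φ i‖ ≤ C)
    (h : Tendsto (fun i => (φ i).comp T) l (𝓝 0)) (y : F) :
    Tendsto (fun i => φ i y) l (𝓝 0) := by
  have hequi : Equicontinuous ((↑) ∘ φ : ι → F → 𝕜) :=
    ((NormedSpace.equicontinuous_TFAE φ).out 5 1).mp (show ∃ C, ∀ i, ‖φ i‖ ≤ C from ⟨C, hC⟩)
  have hclosed : IsClosed {y | Tendsto (fun i => φ i y) l (𝓝 0)} :=
    hequi.isClosed_setOfPred_tendsto continuous_const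
  have hrange : Set.range T ⊆ {y | Tendsto (fun i => φ i y) l (𝓝 0)} := by
    rintro _ ⟨x, rfl⟩
    exact ((ContinuousLinearMap.apply 𝕜 𝕜 x).continuous.tendsto 0).comp h
  exact closure_minimal hrange hclosed (hT.closure_range ▸ Set.mem_univ y)

theorem norm_le_div_of_forall_re_le {ψ : StrongDual 𝕜 E} {r u : ℝ} (hr : 0 < r)
    (h : ∀ x ∈ closedBall (0 : E) r, re (ψ x) ≤ u) : ‖ψ‖ ≤ u / r := by
  refine ContinuousLinearMap.opNorm_bound_of_ball_bound hr u ψ fun x hx => ?_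
  rcases eq_or_ne (ψ x) 0 with h0 | h0
  · simpa [h0] using h 0 (mem_closedBall_self hr.le)
  · -- rotating `x` by the unimodular scalar `c` makes `ψ (c • x) = ‖ψ x‖` real
    set c : 𝕜 := (‖ψ x‖ : 𝕜) / ψ x
    have hc : ‖c‖ = 1 := by simp [c, h0]
    have hcx := h (c • x) (by simpa [norm_smul, hc] using hx)
    simpa [c, h0] using hcx

end

section

variable {𝕜 E F : Type*} [RCLike 𝕜] [NormedAddCommGroup E] [NormedSpace 𝕜 E] [NormedSpace ℝ E]
  [IsScalarTower ℝ 𝕜 E] [NormedAddCommGroup F] [NormedSpace 𝕜 F] [NormedSpace ℝ F]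
  [IsScalarTower ℝ 𝕜 F]

theorem mem_closure_image_closedBall_of_forall_comp_eq_zero (S : E →L[𝕜] F) (A : StrongDual 𝕜 E)
    {Ψ : StrongDual 𝕜 (StrongDual 𝕜 E)} (hΨ : ∀ h : StrongDual 𝕜 F, Ψ (h.comp S) = 0) {r : ℝ}
    (hr : ‖Ψ‖ < r) : (Ψ A, (0 : F)) ∈ closure (A.prod S '' closedBall (0 : E) r) := by
  by_contra hnot
  have hr0 : 0 < r := (norm_nonneg Ψ).trans_lt hr
  have hconv : Convex ℝ (closure (A.prod S '' closedBall (0 : E) r)) :=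
    ((convex_closedBall 0 r).linear_image ((A.prod S).toLinearMap.restrictScalars ℝ)).closure
  obtain ⟨g, u, hgK, hgp⟩ := RCLike.geometric_hahn_banach_closed_point (𝕜 := 𝕜) hconv
    isClosed_closure hnot
  set ψ : StrongDual 𝕜 E := g.comp (A.prod S)
  have hψ : ‖ψ‖ ≤ u / r := norm_le_div_of_forall_re_le hr0 fun e he =>
    (hgK _ (subset_closure ⟨e, he, rfl⟩)).le
  have hu : 0 < u := by
    simpa using hgK 0 (subset_closure ⟨0, mem_closedBall_self hr0.le, by simp⟩)
  have hsplit : ∀ p : 𝕜 × F, g p = p.1 * g (1, 0) + g (0, p.2) := fun p => by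
    rw [← smul_eq_mul, ← map_smul, ← map_add]
    simp
  have hΨψ : Ψ ψ = g (Ψ A, 0) := by
    have : ψ = g (1, 0) • A + (g.comp (ContinuousLinearMap.inr 𝕜 𝕜 F)).comp S := by
      ext e
      simp [ψ, hsplit (A e, S e), mul_comm]
    rw [this, map_add, map_smul, hΨ, hsplit (Ψ A, 0)]
    simp [mul_comm, Prod.mk_zero_zero]
  refine lt_irrefl u ?_
  calc
    u < re (g (Ψ A, 0)) := hgp
    _ ≤ ‖Ψ ψ‖ := hΨψ ▸ re_le_norm _
    _ ≤ ‖Ψ‖ * (u / r) := (Ψ.le_opNorm ψ).trans (by gcongr)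
    _ < r * (u / r) := by gcongr
    _ = u := by field_simp

theorem exists_seq_tendsto_of_forall_comp_eq_zero (S : E →L[𝕜] F) (A : StrongDual 𝕜 E)
    {Ψ : StrongDual 𝕜 (StrongDual 𝕜 E)} (hΨ : ∀ h : StrongDual 𝕜 F, Ψ (h.comp S) = 0) {r : ℝ}
    (hr : ‖Ψ‖ < r) :
    ∃ e : ℕ → E, (∀ n, ‖e n‖ ≤ r) ∧ Tendsto (fun n => A (e n)) atTop (𝓝 (Ψ A)) ∧
      Tendsto (fun n => S (e n)) atTop (𝓝 0) := by
  obtain ⟨p, hp, hlim⟩ :=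
    mem_closure_iff_seq_limit.1 (mem_closure_image_closedBall_of_forall_comp_eq_zero S A hΨ hr)
  choose e he hpe using hp
  obtain rfl : (fun n => A.prod S (e n)) = p := funext hpe
  exact ⟨e, fun n => mem_closedBall_zero_iff.1 (he n), (continuous_fst.tendsto _).comp hlim,
    (continuous_snd.tendsto _).comp hlim⟩

end

theorem adj_adj_inclusionInDoubleDual (T : X →L[ℂ] X) (x : X) :
    adj (adj T) (NormedSpace.inclusionInDoubleDual ℂ X x) =
      NormedSpace.inclusionInDoubleDual ℂ X (T x) :=
  rfl

theorem stmt2_general {X : Type*} [NormedAddCommGroup X] [NormedSpace ℂ X]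
    (hX : Grothendieck X) (T : X →L[ℂ] X) :
    LinearMap.ker (adj T : StrongDual ℂ X →ₗ[ℂ] StrongDual ℂ X) = ⊥ ↔
      LinearMap.ker (adj (adj (adj T)) : StrongDual ℂ (StrongDual ℂ (StrongDual ℂ X)) →ₗ[ℂ]
        StrongDual ℂ (StrongDual ℂ (StrongDual ℂ X))) = ⊥ := by
  rw [LinearMap.ker_eq_bot, LinearMap.ker_eq_bot]
  constructor
  · intro hker
    have hdense : DenseRange T :=
      denseRange_of_comp_eq_zero fun φ hφ => hker (hφ.trans (map_zero _).symm)
    rw [injective_iff_map_eq_zero]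
    intro Ψ hΨ
    by_contra hΨ0
    obtain ⟨F₀, hF₀⟩ : ∃ F₀, Ψ F₀ ≠ 0 := by
      contrapose! hΨ0
      exact ContinuousLinearMap.ext hΨ0
    obtain ⟨φ, hφr, hφF₀, hφT⟩ := exists_seq_tendsto_of_forall_comp_eq_zero (adj T) F₀
      (fun h => congr($hΨ h)) (lt_add_one ‖Ψ‖)
    have hweakStar := tendsto_apply_zero_of_tendsto_comp hdense hφr hφT
    exact hF₀ (tendsto_nhds_unique hφF₀ (hX φ hweakStar F₀))
  · intro hker3
    have hcomm : adj (adj (adj T)) ∘ NormedSpace.inclusionInDoubleDual ℂ (StrongDual ℂ X) =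
        NormedSpace.inclusionInDoubleDual ℂ (StrongDual ℂ X) ∘ adj T :=
      funext (adj_adj_inclusionInDoubleDual (adj T))
    exact (hcomm ▸ hker3.comp (NormedSpace.inclusionInDoubleDualLi ℂ).injective).of_comp

/-- If `X` is a complex Banach space which is a Grothendieck space and
`T ∈ L(X)`, then `ker (T*) = {0}` iff `ker (T***) = {0}`. -/
theorem stmt2 {X : Type*} [NormedAddCommGroup X] [NormedSpace ℂ X] [CompleteSpace X]
    (hX : Grothendieck X) (T : X →L[ℂ] X) :
    LinearMap.ker (adj T : StrongDual ℂ X →ₗ[ℂ] StrongDual ℂ X) = ⊥ ↔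
      LinearMap.ker (adj (adj (adj T)) : StrongDual ℂ (StrongDual ℂ (StrongDual ℂ X)) →ₗ[ℂ]
        StrongDual ℂ (StrongDual ℂ (StrongDual ℂ X))) = ⊥ :=
  stmt2_general hX T

end JClassPaper
end
end

section
/- Let X be a complex Banach space and T ∈ L(X). Assume there exists a vector x ∈ X such that the J-set J_T(x) has non-empty interior. Then for every λ ∈ ℂ with |λ| ≤ 1, the operator T − λI has dense range in X; equivalently, the Banach-space adjoint T* ∈ L(X*) has no eigenvalue λ with |λ| ≤ 1, i.e. σ_p(T*) ∩ 𝔻̄ = ∅. -/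
/-!
If `φ ≠ 0` satisfies `φ ∘ T = λ φ` with `|λ| ≤ 1`, then for `y = lim Tᵏⁿ xₙ` in `J_T(x)` we get
`φ y = lim λᵏⁿ φ xₙ`, which is `0` when `|λ| < 1` and has modulus `|φ x|` when `|λ| = 1`.
So `φ` maps `J_T(x)` into `{0} ∪ {|w| = |φ x|}`, which has empty interior in `ℂ`; since a nonzero
functional is an open map, `J_T(x)` has empty interior. By Hahn–Banach, a non-dense range of
`T - λ` produces such a `φ`, and an eigenvector of `T*` is one.
-/

open Filter Topology Metric
open scoped ENNReal

noncomputable section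

namespace JClassPaper

variable {X : Type*} [NormedAddCommGroup X] [NormedSpace ℂ X]

theorem interior_insert_sphere {E : Type*} [NormedAddCommGroup E] [NormedSpace ℝ E]
    [Nontrivial E] (x : E) (r : ℝ) : interior (insert x (sphere x r)) = ∅ := by
  rw [Set.insert_eq, Set.union_comm,
    interior_union_isClosed_of_interior_empty isClosed_sphere (interior_singleton x),
    interior_sphere']

theorem exists_ne_zero_comp_eq_zero_of_not_denseRange {𝕜 E F : Type*} [RCLike 𝕜]
    [NormedAddCommGroup E] [NormedSpace 𝕜 E] [NormedAddCommGroup F] [NormedSpace 𝕜 F]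
    {A : E →L[𝕜] F} (hA : ¬ DenseRange A) : ∃ φ : StrongDual 𝕜 F, φ ≠ 0 ∧ φ.comp A = 0 := by
  set R := LinearMap.range (A : E →ₗ[𝕜] F)
  set C := R.topologicalClosure
  obtain ⟨y, hy⟩ : ∃ y, y ∉ C := by
    contrapose! hA
    rw [DenseRange, dense_iff_closure_eq]
    exact Set.eq_univ_of_forall hA
  have : IsClosed (C : Set F) := R.isClosed_topologicalClosure
  obtain ⟨g, hg⟩ := SeparatingDual.exists_ne_zero (R := 𝕜)
    (mt (Submodule.Quotient.mk_eq_zero C).mp hy)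
  refine ⟨g.comp C.mkQL, fun h => hg (by simpa using congr($h y)), ?_⟩
  ext v
  have hAv : (Submodule.Quotient.mk (A v) : F ⧸ C) = 0 := (Submodule.Quotient.mk_eq_zero C).mpr
    (R.le_topologicalClosure (LinearMap.mem_range_self (A : E →ₗ[𝕜] F) v))
  simp [hAv]

section Eigenfunctional

variable {T : X →L[ℂ] X} {φ : StrongDual ℂ X} {z : ℂ}

theorem apply_pow_apply_of_comp_eq_smul (h : φ.comp T = z • φ) (k : ℕ) (v : X) :
    φ ((T ^ k) v) = z ^ k * φ v := by
  induction k generalizing v with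
  | zero => simp
  | succ k ih =>
    calc φ ((T ^ (k + 1)) v) = (φ.comp T) ((T ^ k) v) := by rw [pow_succ']; rfl
      _ = z ^ (k + 1) * φ v := by
        rw [h, FunLike.coe_smul, Pi.smul_apply, ih, smul_eq_mul, pow_succ', mul_assoc]

theorem apply_mem_insert_sphere_of_mem_JSet (h : φ.comp T = z • φ) (hz : ‖z‖ ≤ 1) {x y : X}
    (hy : y ∈ JSet T x) : φ y ∈ insert 0 (sphere 0 ‖φ x‖) := by
  obtain ⟨k, hk, u, hu, hTu⟩ := hy
  have hlim : Tendsto (fun n => z ^ k n * φ (u n)) atTop (𝓝 (φ y)) := by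
    simpa only [Function.comp_def, apply_pow_apply_of_comp_eq_smul h] using
      (φ.continuous.tendsto y).comp hTu
  have hφu : Tendsto (fun n => φ (u n)) atTop (𝓝 (φ x)) := (φ.continuous.tendsto x).comp hu
  rcases hz.lt_or_eq with hz | hz
  · left
    refine tendsto_nhds_unique hlim ?_
    simpa using ((tendsto_pow_atTop_nhds_zero_of_norm_lt_one hz).comp hk.tendsto_atTop).mul hφu
  · right
    rw [mem_sphere_zero_iff_norm]
    exact tendsto_nhds_unique hlim.norm (by simpa [hz] using hφu.norm)

theorem interior_JSet_eq_empty_of_comp_eq_smul (hφ : φ ≠ 0) (h : φ.comp T = z • φ)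
    (hz : ‖z‖ ≤ 1) (x : X) : interior (JSet T x) = ∅ := by
  have hJ : JSet T x ⊆ φ ⁻¹' insert 0 (sphere 0 ‖φ x‖) :=
    fun y hy => apply_mem_insert_sphere_of_mem_JSet h hz hy
  rw [← Set.subset_empty_iff]
  calc interior (JSet T x) ⊆ interior (φ ⁻¹' insert 0 (sphere 0 ‖φ x‖)) := interior_mono hJ
    _ = φ ⁻¹' interior (insert 0 (sphere 0 ‖φ x‖)) :=
      ((φ.isOpenMap_of_ne_zero hφ).preimage_interior_eq_interior_preimage φ.continuous _).symm
    _ = ∅ := by rw [interior_insert_sphere, Set.preimage_empty]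

end Eigenfunctional

theorem stmt3_general {X : Type*} [NormedAddCommGroup X] [NormedSpace ℂ X]
    (T : X →L[ℂ] X) (x : X) (hx : (interior (JSet T x)).Nonempty) :
    (∀ z : ℂ, ‖z‖ ≤ 1 → DenseRange ⇑(T - z • (1 : X →L[ℂ] X))) ∧
      pointSpectrum (adj T) ∩ closedBall (0:ℂ) 1 = ∅ := by
  have no_eigenfunctional : ∀ (φ : StrongDual ℂ X) (z : ℂ), ‖z‖ ≤ 1 → φ.comp T = z • φ → φ = 0 :=
    fun φ z hz h => by_contra fun hφ =>
      hx.ne_empty (interior_JSet_eq_empty_of_comp_eq_smul hφ h hz x)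
  refine ⟨fun z hz => ?_, Set.eq_empty_of_forall_notMem ?_⟩
  · by_contra hd
    obtain ⟨φ, hφ, hφT⟩ := exists_ne_zero_comp_eq_zero_of_not_denseRange hd
    rw [ContinuousLinearMap.comp_sub, ContinuousLinearMap.comp_smul, ContinuousLinearMap.one_def,
      ContinuousLinearMap.comp_id, sub_eq_zero] at hφT
    exact hφ (no_eigenfunctional φ z hz hφT)
  · rintro w ⟨⟨φ, hφ, hφT⟩, hw⟩
    exact hφ (no_eigenfunctional φ w (mem_closedBall_zero_iff.mp hw) hφT)

/-- Spectral lemma, part (i): if `J_T(x)` has non-empty interior for some `x`,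
then `T - λI` has dense range for every `|λ| ≤ 1`; equivalently `σ_p(T*) ∩ 𝔻̄ = ∅`. -/
theorem stmt3 {X : Type*} [NormedAddCommGroup X] [NormedSpace ℂ X] [CompleteSpace X]
    (T : X →L[ℂ] X) (x : X) (hx : (interior (JSet T x)).Nonempty) :
    (∀ z : ℂ, ‖z‖ ≤ 1 → DenseRange ⇑(T - z • (1 : X →L[ℂ] X))) ∧
      pointSpectrum (adj T) ∩ closedBall (0:ℂ) 1 = ∅ :=
  stmt3_general T x hx

end JClassPaper
end
end

section
/- Let X be a complex Banach space and T ∈ L(X). Assume there exists a non-zero vector x ∈ X such that the J-set J_T(x) has non-empty interior. Then the spectrum of T meets the unit circle: σ(T) ∩ ∂𝔻 ≠ ∅. -/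
/-!
If `σ(T)` misses the unit circle, it misses a closed annulus `r ≤ |z| ≤ s` with `r < 1 < s`.
Put `I_ρ(m) = ∮_{|z|=ρ} zᵐ R(z) dz`. Integrating `R(z) T = z R(z) - 1` gives
`I_ρ(m) Tⁿ = I_ρ(m + n)` for `m ≥ 0` and `I_ρ(-n) Tⁿ = I_ρ(0) - 2πi` for `n ≥ 1`, while
`‖I_ρ(m)‖ ≤ C ρᵐ`. Hence `I_r(0) Tⁿ → 0`, so `I_r(0)` kills `J_T(x)`, and being zero on a set with
interior it is zero. By Cauchy's theorem `I_s(0) = I_r(0) = 0`, so `Sₙ = -(2πi)⁻¹ I_s(-n)` is a left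
inverse of `Tⁿ` with `Sₙ → 0`. If `uₙ → x` and `T^{kₙ} uₙ → y`, then `uₙ = S_{kₙ} T^{kₙ} uₙ → 0`,
so `x = 0`.
-/

open Filter Topology Metric
open scoped ENNReal

noncomputable section

section ResolventMoments

variable {A : Type*} [NormedRing A] [NormedAlgebra ℂ A] {a : A} {ρ : ℝ}

lemma circleIntegral_zpow_center_zero (hρ : 0 < ρ) (m : ℤ) :
    (∮ z in C(0, ρ), z ^ m) = if m = -1 then 2 * Real.pi * Complex.I else 0 := by
  split_ifs with hm
  · subst hm
    simpa using circleIntegral.integral_sub_inv_of_mem_ball (mem_ball_self hρ : (0 : ℂ) ∈ ball 0 ρ)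
  · simpa using circleIntegral.integral_sub_zpow_of_ne hm 0 0 ρ

lemma resolvent_mul_self {z : ℂ} (hz : z ∈ resolventSet ℂ a) :
    resolvent a z * a = z • resolvent a z - 1 := by
  have h : resolvent a z * (algebraMap ℂ A z - a) = 1 := Ring.inverse_mul_cancel _ hz
  rw [mul_sub, ← Algebra.commutes, ← Algebra.smul_def] at h
  rw [← h, sub_sub_cancel]

lemma circleIntegrable_zpow_smul {f : ℂ → A} (hρ : 0 < ρ) (hf : ContinuousOn f (sphere 0 ρ))
    (m : ℤ) : CircleIntegrable (fun z => z ^ m • f z) 0 ρ :=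
  ContinuousOn.circleIntegrable hρ.le fun z hz =>
    (continuousAt_zpow₀ z m (Or.inl (ne_of_mem_sphere hz hρ.ne'))).continuousWithinAt.smul (hf z hz)

variable [CompleteSpace A]

lemma circleIntegral_mul_const {f : ℂ → A} {c : ℂ} (hf : CircleIntegrable f c ρ) (b : A) :
    (∮ z in C(c, ρ), f z * b) = (∮ z in C(c, ρ), f z) * b := by
  simpa only [circleIntegral, map_smul, ContinuousLinearMap.flip_apply,
    ContinuousLinearMap.mul_apply'] using
    ((ContinuousLinearMap.mul ℂ A).flip b).intervalIntegral_comp_comm hf.out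

lemma continuousOn_resolvent {s : Set ℂ} (h : s ⊆ resolventSet ℂ a) :
    ContinuousOn (resolvent a) s := fun _ hz =>
  (spectrum.hasDerivAt_resolvent_const_left (h hz)).continuousAt.continuousWithinAt

/-- When the circle `|z| = ρ` lies in the resolvent set, `(2πi)⁻¹ • resolventMoment a ρ 0` is the
Riesz projection for the part of the spectrum inside it. -/
def resolventMoment (a : A) (ρ : ℝ) (m : ℤ) : A :=
  ∮ z in C(0, ρ), z ^ m • resolvent a z

lemma resolventMoment_zero_eq_of_annulus {r s : ℝ} (hr : 0 < r) (hrs : r ≤ s)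
    (h : ∀ z : ℂ, r ≤ ‖z‖ → ‖z‖ ≤ s → z ∈ resolventSet ℂ a) :
    resolventMoment a s 0 = resolventMoment a r 0 := by
  simp only [resolventMoment, zpow_zero, one_smul]
  refine Complex.circleIntegral_eq_of_differentiable_on_annulus_off_countable hr hrs
    Set.countable_empty (continuousOn_resolvent fun z ⟨hzs, hzr⟩ => ?_) fun z ⟨⟨hzs, hzr⟩, _⟩ => ?_
  · rw [mem_closedBall_zero_iff] at hzs
    rw [mem_ball_zero_iff, not_lt] at hzr
    exact h z hzr hzs
  · rw [mem_ball_zero_iff] at hzs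
    rw [mem_closedBall_zero_iff, not_le] at hzr
    exact (spectrum.hasDerivAt_resolvent_const_left (h z hzr.le hzs.le)).differentiableAt

lemma exists_annulus_subset_resolventSet (hσ : Disjoint (spectrum ℂ a) (sphere 0 1)) :
    ∃ r s : ℝ, 0 < r ∧ r < 1 ∧ 1 < s ∧ ∀ z : ℂ, r ≤ ‖z‖ → ‖z‖ ≤ s → z ∈ resolventSet ℂ a := by
  obtain ⟨δ, hδ, hσδ⟩ := (spectrum.isCompact a).exists_forall_le' (f := fun z : ℂ => |‖z‖ - 1|)
    (by fun_prop) (a := 0) fun z hz => abs_pos.2 <| sub_ne_zero.2 fun h1 =>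
      hσ.ne_of_mem hz (mem_sphere_zero_iff_norm.2 h1) rfl
  refine ⟨1 - min δ 1 / 2, 1 + δ / 2, by linarith [min_le_right δ 1],
    by linarith [lt_min hδ one_pos], by linarith, fun z h1 h2 => ?_⟩
  by_contra hz
  have hle : |‖z‖ - 1| ≤ δ / 2 := abs_le.2 ⟨by linarith [min_le_left δ 1], by linarith⟩
  linarith [hσδ z hz]

variable (hρ : 0 < ρ) (h : sphere (0 : ℂ) ρ ⊆ resolventSet ℂ a)
include hρ h

lemma resolventMoment_mul_self (m : ℤ) :
    resolventMoment a ρ m * a = resolventMoment a ρ (m + 1) - (∮ z in C(0, ρ), z ^ m) • 1 := by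
  have hR := circleIntegrable_zpow_smul hρ (continuousOn_resolvent h)
  rw [resolventMoment, ← circleIntegral_mul_const (hR m), resolventMoment,
    ← circleIntegral.integral_smul_const,
    ← circleIntegral.integral_sub (hR _) (circleIntegrable_zpow_smul hρ continuousOn_const m)]
  refine circleIntegral.integral_congr hρ.le fun z hz => ?_
  rw [smul_mul_assoc, resolvent_mul_self (h hz), smul_sub, smul_smul,
    zpow_add_one₀ (ne_of_mem_sphere hz hρ.ne')]

lemma resolventMoment_mul_pow {m : ℤ} (hm : 0 ≤ m) (n : ℕ) :
    resolventMoment a ρ m * a ^ n = resolventMoment a ρ (m + n) := by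
  induction n with
  | zero => simp
  | succ n ih =>
    have hmn : m + n ≠ -1 := by omega
    rw [pow_succ, ← mul_assoc, ih, resolventMoment_mul_self hρ h,
      circleIntegral_zpow_center_zero hρ, if_neg hmn, zero_smul, sub_zero]
    congr 1
    push_cast
    ring

lemma resolventMoment_neg_mul_pow {n : ℕ} (hn : 0 < n) :
    resolventMoment a ρ (-n) * a ^ n = resolventMoment a ρ 0 - (2 * Real.pi * Complex.I) • 1 := by
  induction n, hn using Nat.le_induction with
  | base =>
    have h1 := resolventMoment_mul_self hρ h (-1)
    rw [circleIntegral_zpow_center_zero hρ, if_pos rfl] at h1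
    simpa using h1
  | succ n hn ih =>
    have hn1 : -((n + 1 : ℕ) : ℤ) ≠ -1 := by omega
    rw [pow_succ', ← mul_assoc, resolventMoment_mul_self hρ h,
      circleIntegral_zpow_center_zero hρ, if_neg hn1, zero_smul, sub_zero, ← ih]
    congr 2
    push_cast
    ring

lemma exists_norm_resolventMoment_le : ∃ C, ∀ m : ℤ, ‖resolventMoment a ρ m‖ ≤ C * ρ ^ m := by
  obtain ⟨M, hM⟩ := (isCompact_sphere (0 : ℂ) ρ).exists_bound_of_continuousOn
    (continuousOn_resolvent h)
  refine ⟨2 * Real.pi * ρ * M, fun m => ?_⟩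
  have hle := circleIntegral.norm_integral_le_of_norm_le_const hρ.le
    (f := fun z => z ^ m • resolvent a z) (C := ρ ^ m * M) fun z hz => by
      rw [norm_smul, norm_zpow, mem_sphere_zero_iff_norm.1 hz]
      exact mul_le_mul_of_nonneg_left (hM z hz) (zpow_nonneg hρ.le m)
  rw [resolventMoment]
  linarith

lemma tendsto_resolventMoment_natCast_atTop (hρ1 : ρ < 1) :
    Tendsto (fun n : ℕ => resolventMoment a ρ n) atTop (𝓝 0) := by
  obtain ⟨C, hC⟩ := exists_norm_resolventMoment_le hρ h
  refine squeeze_zero_norm (fun n => by simpa using hC n) ?_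
  simpa using (tendsto_pow_atTop_nhds_zero_of_lt_one hρ.le hρ1).const_mul C

lemma tendsto_resolventMoment_neg_natCast_atTop (hρ1 : 1 < ρ) :
    Tendsto (fun n : ℕ => resolventMoment a ρ (-n)) atTop (𝓝 0) := by
  obtain ⟨C, hC⟩ := exists_norm_resolventMoment_le hρ h
  refine squeeze_zero_norm (fun n => by simpa [← inv_pow] using hC (-n)) ?_
  simpa using (tendsto_pow_atTop_nhds_zero_of_lt_one (inv_nonneg.2 hρ.le)
    (inv_lt_one_of_one_lt₀ hρ1)).const_mul C

end ResolventMoments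

namespace JClassPaper

variable {X : Type*} [NormedAddCommGroup X] [NormedSpace ℂ X]

lemma map_eq_zero_of_mem_JSet {T B : X →L[ℂ] X} {x y : X}
    (hB : Tendsto (fun n => B * T ^ n) atTop (𝓝 0)) (hy : y ∈ JSet T x) : B y = 0 := by
  obtain ⟨k, hk, u, hu, hTu⟩ := hy
  have hBy : Tendsto (fun n => B ((T ^ k n) (u n))) atTop (𝓝 (B y)) :=
    (B.continuous.tendsto y).comp hTu
  have hzero : Tendsto (fun n => (B * T ^ k n) (u n)) atTop (𝓝 ((0 : X →L[ℂ] X) x)) :=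
    (isBoundedBilinearMap_apply.continuous.tendsto (0, x)).comp
      ((hB.comp hk.tendsto_atTop).prodMk_nhds hu)
  exact tendsto_nhds_unique hBy (by simpa using hzero)

lemma eq_zero_of_tendsto_mul_pow {T B : X →L[ℂ] X} {x : X} (hx : (interior (JSet T x)).Nonempty)
    (hB : Tendsto (fun n => B * T ^ n) atTop (𝓝 0)) : B = 0 := by
  have hker : (interior (LinearMap.ker (B : X →ₗ[ℂ] X) : Set X)).Nonempty :=
    hx.mono (interior_mono fun y hy => map_eq_zero_of_mem_JSet hB hy)
  ext y
  have hy : y ∈ LinearMap.ker (B : X →ₗ[ℂ] X) :=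
    Submodule.eq_top_of_nonempty_interior' _ hker ▸ Submodule.mem_top
  simpa using hy

lemma eq_zero_of_mem_JSet_of_mul_pow_eq_one {T : X →L[ℂ] X} {S : ℕ → X →L[ℂ] X} {x y : X}
    (hS : ∀ᶠ n in atTop, S n * T ^ n = 1) (hS0 : Tendsto S atTop (𝓝 0)) (hy : y ∈ JSet T x) :
    x = 0 := by
  obtain ⟨k, hk, u, hu, hTu⟩ := hy
  have hzero : Tendsto (fun n => S (k n) ((T ^ k n) (u n))) atTop (𝓝 ((0 : X →L[ℂ] X) y)) :=
    (isBoundedBilinearMap_apply.continuous.tendsto (0, y)).comp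
      ((hS0.comp hk.tendsto_atTop).prodMk_nhds hTu)
  have hSu : (fun n => S (k n) ((T ^ k n) (u n))) =ᶠ[atTop] u :=
    (hk.tendsto_atTop.eventually hS).mono fun n hn => by
      simpa using congrArg (fun R : X →L[ℂ] X => R (u n)) hn
  exact tendsto_nhds_unique hu (by simpa using hzero.congr' hSu)

/-- Spectral lemma, part (ii): if `J_T(x)` has non-empty interior for some
non-zero `x`, then the spectrum of `T` meets the unit circle. -/
theorem stmt4 {X : Type*} [NormedAddCommGroup X] [NormedSpace ℂ X] [CompleteSpace X]
    (T : X →L[ℂ] X) (x : X) (hx0 : x ≠ 0) (hx : (interior (JSet T x)).Nonempty) :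
    (spectrum ℂ T ∩ sphere (0:ℂ) 1).Nonempty := by
  by_contra hσ
  obtain ⟨r, s, hr0, hr1, hs1, hann⟩ := exists_annulus_subset_resolventSet (a := T)
    (Set.disjoint_iff_inter_eq_empty.2 (Set.not_nonempty_iff_eq_empty.1 hσ))
  have hsphere : ∀ ρ, r ≤ ρ → ρ ≤ s → sphere (0 : ℂ) ρ ⊆ resolventSet ℂ T := fun ρ h1 h2 z hz =>
    hann z (by rwa [mem_sphere_zero_iff_norm.1 hz]) (by rwa [mem_sphere_zero_iff_norm.1 hz])
  have hr := hsphere r le_rfl (by linarith)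
  have hs := hsphere s (by linarith) le_rfl
  have hPr : resolventMoment T r 0 = 0 := eq_zero_of_tendsto_mul_pow hx <| by
    simpa [resolventMoment_mul_pow hr0 hr le_rfl] using
      tendsto_resolventMoment_natCast_atTop hr0 hr hr1
  have hPs : resolventMoment T s 0 = 0 :=
    (resolventMoment_zero_eq_of_annulus hr0 (by linarith) hann).trans hPr
  refine hx0 (eq_zero_of_mem_JSet_of_mul_pow_eq_one
    (S := fun n => -(2 * Real.pi * Complex.I)⁻¹ • resolventMoment T s (-n)) ?_ ?_
    (interior_subset hx.some_mem))
  · filter_upwards [eventually_gt_atTop 0] with n hn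
    rw [smul_mul_assoc, resolventMoment_neg_mul_pow (by linarith) hs hn, hPs, zero_sub, smul_neg,
      neg_smul, neg_neg, smul_smul, inv_mul_cancel₀ Complex.two_pi_I_ne_zero, one_smul]
  · simpa using (tendsto_resolventMoment_neg_natCast_atTop (by linarith) hs hs1).const_smul
      (-(2 * Real.pi * Complex.I)⁻¹)

end JClassPaper
end
end

section
/- Let X be a complex Banach space with the property that every bounded linear operator T on X satisfies ∂σ(T) ⊆ σ_p(T*), i.e. every point of the topological boundary of the spectrum of T is an eigenvalue of the Banach-space adjoint T*. Then X contains no complemented infinite-dimensional separable closed subspace; that is, no infinite-dimensional separable closed subspace of X is the range of a bounded linear projection. -/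
open Filter Topology Metric
open scoped ENNReal

noncomputable section

namespace JClassPaper

variable {X : Type*} [NormedAddCommGroup X] [NormedSpace ℂ X]

/-! If `P` projects onto a separable infinite-dimensional subspace `N`, pick a biorthogonal
system `(eₙ, gₙ)` with `eₙ ∈ N` spanning a dense subspace of `N`, and let `B x = ∑ cₙ gₙ₊₁(x) eₙ`
be the backward shift along it, with weights `cₙ` decaying fast enough that `B` is quasinilpotent.
Then `T = (1 - P) + B` has spectrum in `{0, 1}`, and `0` is an eigenvalue of `T` (with eigenvector
`e₀`), hence a boundary point of the finite set `σ(T)`. But `T` has dense range: it is the identity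
on `ker P`, and its range contains every `eₙ`. So `T*` is injective and `0 ∉ σ_p(T*)`. -/

theorem spectrum_add_subset_of_mul_eq_zero {𝕜 A : Type*} [Field 𝕜] [Ring A] [Algebra 𝕜 A]
    {a b : A} (hab : a * b = 0) :
    spectrum 𝕜 (a + b) ⊆ insert 0 (spectrum 𝕜 a ∪ spectrum 𝕜 b) := by
  intro z hz
  by_contra! hz'
  simp only [Set.mem_insert_iff, Set.mem_union, not_or] at hz'
  obtain ⟨hz0, ha, hb⟩ := hz'
  have key : (algebraMap 𝕜 A z - a) * (algebraMap 𝕜 A z - b) =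
      algebraMap 𝕜 A z * (algebraMap 𝕜 A z - (a + b)) := by
    rw [sub_mul, mul_sub, mul_sub, mul_sub, mul_add, hab, Algebra.commutes z a]
    abel
  have hunit := (spectrum.notMem_iff.1 ha).mul (spectrum.notMem_iff.1 hb)
  rw [key, IsUnit.mul_left_iff ((isUnit_iff_ne_zero.2 hz0).map (algebraMap 𝕜 A))] at hunit
  exact spectrum.mem_iff.1 hz hunit

theorem spectrum_subset_zero_of_forall_exists_norm_pow_lt {𝕜 A : Type*} [NormedField 𝕜]
    [NormedRing A] [NormedAlgebra 𝕜 A] [CompleteSpace A] [NormOneClass A] {a : A}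
    (h : ∀ r : ℝ, 0 < r → ∃ k : ℕ, ‖a ^ k‖ < r ^ k) : spectrum 𝕜 a ⊆ {0} := by
  intro z hz
  by_contra hz0
  obtain ⟨k, hk⟩ := h ‖z‖ (norm_pos_iff.2 hz0)
  have := spectrum.norm_le_norm_of_mem (spectrum.pow_mem_pow a k hz)
  rw [norm_pow] at this
  exact (this.trans_lt hk).false

theorem _root_.Set.Countable.subset_frontier {E : Type*} (𝕜 : Type*) [NontriviallyNormedField 𝕜]
    [CompleteSpace 𝕜] [AddCommGroup E] [Module 𝕜 E] [Nontrivial E] [TopologicalSpace E]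
    [ContinuousAdd E] [ContinuousSMul 𝕜 E] {s : Set E} (hs : s.Countable) : s ⊆ frontier s := by
  rw [frontier, interior_eq_empty_iff_dense_compl.2 (hs.dense_compl 𝕜), Set.sdiff_empty]
  exact subset_closure

theorem exists_two_mul_half_pow_sq_lt_pow {r : ℝ} (hr : 0 < r) :
    ∃ k : ℕ, 2 * (1 / 2 : ℝ) ^ ((k + 2) ^ 2) < r ^ (k + 2) := by
  obtain ⟨k, hk⟩ := pow_unbounded_of_one_lt (2 / r) one_lt_two
  refine ⟨k, ?_⟩
  have h2 : 2 < r * 2 ^ (k + 2) := by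
    rw [div_lt_iff₀ hr] at hk
    nlinarith [pow_le_pow_right₀ (one_le_two (α := ℝ)) (Nat.le_add_right k 2)]
  calc 2 * (1 / 2 : ℝ) ^ ((k + 2) ^ 2)
      < (r * 2 ^ (k + 2)) ^ (k + 2) * (1 / 2) ^ ((k + 2) ^ 2) := by
        gcongr
        exact h2.trans_le (le_self_pow₀ (by linarith) (by omega))
    _ = r ^ (k + 2) := by rw [mul_pow, ← pow_mul, ← sq, mul_assoc, ← mul_pow]; norm_num

theorem prod_half_pow_le (n k : ℕ) :
    ∏ j ∈ Finset.range (k + 1), (1 / 2 : ℝ) ^ (2 * (n + j) + 2) ≤ (1 / 2) ^ (n + (k + 1) ^ 2) := by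
  rw [Finset.prod_pow_eq_pow_sum]
  refine pow_le_pow_of_le_one (by norm_num) (by norm_num) ?_
  induction k with
  | zero => norm_num; omega
  | succ k ih => rw [Finset.sum_range_succ]; nlinarith

section Biorthogonal

variable {𝕜 E : Type*} [RCLike 𝕜] [NormedAddCommGroup E] [NormedSpace 𝕜 E]

theorem apply_eq_ite_of_forall_lt {ι : Type*} [LinearOrder ι] {e : ι → E} {g : ι → StrongDual 𝕜 E}
    (h₁ : ∀ i, g i (e i) = 1) (h₀ : ∀ i j, i < j → g j (e i) = 0 ∧ g i (e j) = 0) (i j : ι) :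
    g i (e j) = if i = j then 1 else 0 := by
  rcases lt_trichotomy i j with hij | rfl | hij
  · simp [hij.ne, (h₀ i j hij).2]
  · simp [h₁ i]
  · simp [hij.ne', (h₀ j i hij).1]

theorem exists_dual_eq_one_of_notMem (S : Submodule 𝕜 E) [FiniteDimensional 𝕜 S] {v : E}
    (hv : v ∉ S) : ∃ g : StrongDual 𝕜 E, g v = 1 ∧ ∀ s ∈ S, g s = 0 := by
  have : IsClosed (S : Set E) := S.closed_of_finiteDimensional
  obtain ⟨g₀, hg₀⟩ := SeparatingDual.exists_eq_one (R := 𝕜) (x := S.mkQ v) (by simpa using hv)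
  exact ⟨g₀ ∘L S.mkQL, hg₀, fun s hs => by simp [(Submodule.Quotient.mk_eq_zero S).2 hs]⟩

def IsBiorthogonalExtension (N : Submodule 𝕜 E) (x : E) {n : ℕ} (s : Fin n → E × StrongDual 𝕜 E)
    (p : E × StrongDual 𝕜 E) : Prop :=
  p.1 ∈ N ∧ p.2 p.1 = 1 ∧ (∀ i, p.2 (s i).1 = 0 ∧ (s i).2 p.1 = 0) ∧
    x ∈ Submodule.span 𝕜 (insert p.1 (Set.range fun i => (s i).1))

theorem exists_isBiorthogonalExtension {N : Submodule 𝕜 E} (hN : ¬FiniteDimensional 𝕜 N)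
    {x : E} (hx : x ∈ N) {n : ℕ} (s : Fin n → E × StrongDual 𝕜 E) (hsN : ∀ i, (s i).1 ∈ N)
    (hs : ∀ i j, (s i).2 (s j).1 = if i = j then 1 else 0) :
    ∃ p, IsBiorthogonalExtension N x s p := by
  set S := Submodule.span 𝕜 (Set.range fun i => (s i).1)
  have : FiniteDimensional 𝕜 S := FiniteDimensional.span_of_finite 𝕜 (Set.finite_range _)
  have hSN : S ≤ N := Submodule.span_le.2 (Set.range_subset_iff.2 hsN)
  obtain ⟨w, hwN, hwS, hxw⟩ : ∃ w ∈ N, w ∉ S ∧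
      x ∈ Submodule.span 𝕜 (insert w (Set.range fun i => (s i).1)) := by
    by_cases hxS : x ∈ S
    · obtain ⟨w, hwN, hwS⟩ : ∃ w ∈ N, w ∉ S := by
        by_contra! h
        exact hN (Submodule.finiteDimensional_of_le h)
      exact ⟨w, hwN, hwS, Submodule.span_mono (Set.subset_insert _ _) hxS⟩
    · exact ⟨x, hx, hxS, Submodule.subset_span (Set.mem_insert _ _)⟩
  -- removing from `w` its components along the `s i` makes it annihilated by the `(s i).2`
  set σ := ∑ i, (s i).2 w • (s i).1
  have hσS : σ ∈ S := Submodule.sum_mem _ fun i _ => S.smul_mem _ (Submodule.subset_span ⟨i, rfl⟩)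
  have hvS : w - σ ∉ S := fun h => hwS (by simpa using S.add_mem h hσS)
  obtain ⟨g, hgv, hgS⟩ := exists_dual_eq_one_of_notMem S hvS
  refine ⟨(w - σ, g), N.sub_mem hwN (hSN hσS), hgv,
    fun i => ⟨hgS _ (Submodule.subset_span ⟨i, rfl⟩), by simp [σ, hs]⟩, ?_⟩
  obtain ⟨a, z, hz, rfl⟩ := Submodule.mem_span_insert.1 hxw
  refine Submodule.mem_span_insert.2 ⟨a, a • σ + z, S.add_mem (S.smul_mem a hσS) hz, ?_⟩
  simp only [smul_sub]
  abel

/-- `Classical.epsilon` returns junk unless an extension exists; that one always does is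
`isBiorthogonalExtension_biorthogonalSeq`. -/
def biorthogonalSeq (N : Submodule 𝕜 E) (x : ℕ → E) : ℕ → E × StrongDual 𝕜 E
  | n => Classical.epsilon (IsBiorthogonalExtension N (x n) fun i : Fin n => biorthogonalSeq N x i)

theorem isBiorthogonalExtension_biorthogonalSeq {N : Submodule 𝕜 E}
    (hN : ¬FiniteDimensional 𝕜 N) {x : ℕ → E} (hx : ∀ n, x n ∈ N) (n : ℕ) :
    IsBiorthogonalExtension N (x n) (fun i : Fin n => biorthogonalSeq N x i)
      (biorthogonalSeq N x n) := by
  induction n using Nat.strong_induction_on with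
  | _ n ih =>
    rw [biorthogonalSeq]
    refine Classical.epsilon_spec
      (exists_isBiorthogonalExtension hN (hx n) _ (fun i => (ih i i.2).1) ?_)
    exact apply_eq_ite_of_forall_lt (fun i => (ih i i.2).2.1)
      fun i j hij => (ih j j.2).2.2.1 ⟨i, hij⟩

theorem exists_biorthogonal_seq {N : Submodule 𝕜 E}
    (hsep : TopologicalSpace.IsSeparable (N : Set E)) (hN : ¬FiniteDimensional 𝕜 N) :
    ∃ (e : ℕ → E) (g : ℕ → StrongDual 𝕜 E), (∀ n, e n ∈ N) ∧
      (∀ i j, g i (e j) = if i = j then 1 else 0) ∧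
      (N : Set E) ⊆ closure (Submodule.span 𝕜 (Set.range e)) := by
  obtain ⟨t, htN, htc, hNt⟩ := hsep.exists_countable_dense_subset
  obtain ⟨x, hxt⟩ := (htc.insert 0).exists_eq_range (Set.insert_nonempty 0 t)
  have hxN : ∀ n, x n ∈ N := fun n =>
    (hxt ▸ Set.mem_range_self n : x n ∈ insert 0 t).elim (· ▸ N.zero_mem) (htN ·)
  have hspec := isBiorthogonalExtension_biorthogonalSeq hN hxN
  refine ⟨fun n => (biorthogonalSeq N x n).1, fun n => (biorthogonalSeq N x n).2,
    fun n => (hspec n).1,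
    apply_eq_ite_of_forall_lt (fun n => (hspec n).2.1) fun i j hij => (hspec j).2.2.1 ⟨i, hij⟩,
    hNt.trans (closure_mono ((Set.subset_insert 0 t).trans (hxt ▸ ?_)))⟩
  rintro _ ⟨n, rfl⟩
  refine Submodule.span_mono ?_ (hspec n).2.2.2
  rintro _ (rfl | ⟨i, rfl⟩)
  exacts [⟨n, rfl⟩, ⟨i, rfl⟩]

end Biorthogonal

section WeightedShift

variable {𝕜 E : Type*} [RCLike 𝕜] [NormedAddCommGroup E] [NormedSpace 𝕜 E]
  (e : ℕ → E) (g : ℕ → StrongDual 𝕜 E)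

/-- The factor `(1/2)^(2n+2)` makes products of `k` consecutive weights decay like `(1/2)^(k²)`
(`prod_half_pow_le`), and the denominator absorbs `‖eₙ‖` and `‖gₙ₊₁‖`. -/
def shiftWeight (n : ℕ) : ℝ :=
  (1 / 2) ^ (2 * n + 2) / ((1 + ‖e n‖) * (1 + ‖g (n + 1)‖))

theorem shiftWeight_pos (n : ℕ) : 0 < shiftWeight e g n := by
  unfold shiftWeight; positivity

theorem shiftWeight_mul_le {n : ℕ} {a b : ℝ} (ha : a ≤ 1 + ‖e n‖) (hb₀ : 0 ≤ b)
    (hb : b ≤ 1 + ‖g (n + 1)‖) : shiftWeight e g n * (a * b) ≤ (1 / 2) ^ (2 * n + 2) := by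
  rw [shiftWeight, div_mul_eq_mul_div, div_le_iff₀ (by positivity)]
  gcongr

theorem norm_shiftWeight_smul_smulRight_le (n : ℕ) :
    ‖(shiftWeight e g n : 𝕜) • (g (n + 1)).smulRight (e n)‖ ≤ (1 / 2) ^ n := by
  rw [norm_smul, ContinuousLinearMap.norm_smulRight_apply, RCLike.norm_ofReal,
    abs_of_pos (shiftWeight_pos e g n), mul_comm ‖g _‖]
  refine (shiftWeight_mul_le e g (by linarith) (norm_nonneg _) (by linarith)).trans ?_
  exact pow_le_pow_of_le_one (by norm_num) (by norm_num) (by omega)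

def weightedShift [CompleteSpace E] : E →L[𝕜] E :=
  ∑' n, (shiftWeight e g n : 𝕜) • (g (n + 1)).smulRight (e n)

variable [CompleteSpace E]

theorem hasSum_weightedShift_apply (x : E) :
    HasSum (fun n => ((shiftWeight e g n : 𝕜) * g (n + 1) x) • e n) (weightedShift e g x) := by
  have := (Summable.of_norm_bounded summable_geometric_two
    (norm_shiftWeight_smul_smulRight_le e g)).hasSum.mapL (ContinuousLinearMap.apply 𝕜 E x)
  simpa [weightedShift, mul_smul] using this

variable {e g}

theorem comp_weightedShift_of_forall_apply_eq {P : E →L[𝕜] E} (hPe : ∀ n, P (e n) = e n) :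
    P ∘L weightedShift e g = weightedShift e g := by
  ext x
  have := P.hasSum (hasSum_weightedShift_apply e g x)
  simp only [map_smul, hPe] at this
  exact this.unique (hasSum_weightedShift_apply e g x)

theorem apply_weightedShift (hbi : ∀ i j, g i (e j) = if i = j then 1 else 0) (m : ℕ) (x : E) :
    g m (weightedShift e g x) = shiftWeight e g m * g (m + 1) x := by
  have := (g m).hasSum (hasSum_weightedShift_apply e g x)
  simp only [map_smul, hbi, smul_eq_mul, mul_ite, mul_one, mul_zero] at this
  rw [← this.tsum_eq, tsum_ite_eq']

theorem weightedShift_apply_zero (hbi : ∀ i j, g i (e j) = if i = j then 1 else 0) :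
    weightedShift e g (e 0) = 0 := by
  have := hasSum_weightedShift_apply e g (e 0)
  simp only [hbi, Nat.add_eq_zero_iff, one_ne_zero, and_false, ↓reduceIte, mul_zero, zero_smul]
    at this
  exact this.unique hasSum_zero

theorem weightedShift_apply_succ (hbi : ∀ i j, g i (e j) = if i = j then 1 else 0) (m : ℕ) :
    weightedShift e g (e (m + 1)) = (shiftWeight e g m : 𝕜) • e m := by
  have := hasSum_weightedShift_apply e g (e (m + 1))
  simp only [hbi, Nat.add_right_cancel_iff, mul_ite, mul_one, mul_zero, ite_smul, zero_smul] at this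
  rw [← this.tsum_eq, tsum_ite_eq]

theorem norm_apply_weightedShift_pow_le (hbi : ∀ i j, g i (e j) = if i = j then 1 else 0)
    (k m : ℕ) (x : E) :
    ‖g m ((weightedShift e g ^ (k + 1)) x)‖ ≤
      (∏ j ∈ Finset.range (k + 1), (1 / 2 : ℝ) ^ (2 * (m + j) + 2)) * ‖x‖ := by
  induction k generalizing m with
  | zero =>
    rw [pow_one, apply_weightedShift hbi, norm_mul, RCLike.norm_ofReal,
      abs_of_pos (shiftWeight_pos e g m), Finset.prod_range_one, add_zero]
    calc shiftWeight e g m * ‖g (m + 1) x‖ ≤ shiftWeight e g m * (1 * ‖g (m + 1)‖) * ‖x‖ := by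
          rw [one_mul, mul_assoc]
          exact mul_le_mul_of_nonneg_left ((g (m + 1)).le_opNorm x) (shiftWeight_pos e g m).le
      _ ≤ _ := by
          gcongr
          exact shiftWeight_mul_le e g (by simp) (norm_nonneg _) (by simp)
  | succ k ih =>
    rw [pow_succ', mul_apply_eq_comp, apply_weightedShift hbi, norm_mul, RCLike.norm_ofReal,
      abs_of_pos (shiftWeight_pos e g m), Finset.prod_range_succ', add_zero,
      mul_comm _ ((1 / 2 : ℝ) ^ _), mul_assoc]
    refine mul_le_mul ?_ ?_ (norm_nonneg _) (by positivity)
    · simpa using shiftWeight_mul_le e g (a := 1) (b := 1) (by simp) zero_le_one (by simp)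
    · simpa only [add_assoc, add_comm 1] using ih (m + 1)

theorem norm_weightedShift_pow_le (hbi : ∀ i j, g i (e j) = if i = j then 1 else 0) (k : ℕ) :
    ‖weightedShift e g ^ (k + 2)‖ ≤ 2 * (1 / 2 : ℝ) ^ ((k + 2) ^ 2) := by
  refine ContinuousLinearMap.opNorm_le_bound _ (by positivity) fun x => ?_
  rw [pow_succ', mul_apply_eq_comp, mul_assoc]
  refine (hasSum_weightedShift_apply e g _).norm_le_of_bounded
    (hasSum_geometric_two.mul_right ((1 / 2 : ℝ) ^ ((k + 2) ^ 2) * ‖x‖)) fun n => ?_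
  calc ‖((shiftWeight e g n : 𝕜) * g (n + 1) ((weightedShift e g ^ (k + 1)) x)) • e n‖
      = shiftWeight e g n * (‖e n‖ * 1) * ‖g (n + 1) ((weightedShift e g ^ (k + 1)) x)‖ := by
        rw [norm_smul, norm_mul, RCLike.norm_ofReal, abs_of_pos (shiftWeight_pos e g n)]
        ring
    _ ≤ (1 / 2) ^ (2 * n + 2) *
          ((∏ j ∈ Finset.range (k + 1), (1 / 2 : ℝ) ^ (2 * (n + 1 + j) + 2)) * ‖x‖) :=
        mul_le_mul (shiftWeight_mul_le e g (by linarith) zero_le_one (by simp))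
          (norm_apply_weightedShift_pow_le hbi k (n + 1) x) (norm_nonneg _) (by positivity)
    _ = (∏ j ∈ Finset.range (k + 2), (1 / 2 : ℝ) ^ (2 * (n + j) + 2)) * ‖x‖ := by
        rw [Finset.prod_range_succ' _ (k + 1)]
        simp only [add_assoc, add_comm 1, add_zero]
        ring
    _ ≤ (1 / 2) ^ (n + (k + 2) ^ 2) * ‖x‖ := by gcongr; exact prod_half_pow_le n (k + 1)
    _ = (1 / 2) ^ n * ((1 / 2) ^ ((k + 2) ^ 2) * ‖x‖) := by rw [pow_add, mul_assoc]

theorem spectrum_weightedShift_subset (hbi : ∀ i j, g i (e j) = if i = j then 1 else 0) :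
    spectrum 𝕜 (weightedShift e g) ⊆ {0} := by
  have : Nontrivial E := ⟨e 0, 0, fun h => by simpa [h] using hbi 0 0⟩
  refine spectrum_subset_zero_of_forall_exists_norm_pow_lt fun r hr => ?_
  obtain ⟨k, hk⟩ := exists_two_mul_half_pow_sq_lt_pow hr
  exact ⟨k + 2, (norm_weightedShift_pow_le hbi k).trans_lt hk⟩

variable {P : E →L[𝕜] E}

theorem spectrum_one_sub_add_weightedShift_subset (hP : IsIdempotentElem P)
    (hPe : ∀ n, P (e n) = e n) (hbi : ∀ i j, g i (e j) = if i = j then 1 else 0) :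
    spectrum 𝕜 (1 - P + weightedShift e g) ⊆ {0, 1} := by
  have hQB : (1 - P) * weightedShift e g = 0 := by
    rw [sub_mul, one_mul, ContinuousLinearMap.mul_def, comp_weightedShift_of_forall_apply_eq hPe,
      sub_self]
  refine (spectrum_add_subset_of_mul_eq_zero hQB).trans ?_
  rintro z (rfl | hz | hz)
  · exact Or.inl rfl
  · exact hP.one_sub.spectrum_subset 𝕜 hz
  · exact Or.inl (spectrum_weightedShift_subset hbi hz)

theorem eq_zero_of_comp_one_sub_add_weightedShift (hPe : ∀ n, P (e n) = e n)
    (hbi : ∀ i j, g i (e j) = if i = j then 1 else 0)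
    (hPrange : ∀ x, P x ∈ closure (Submodule.span 𝕜 (Set.range e) : Set E)) {φ : StrongDual 𝕜 E}
    (hφ : φ ∘L (1 - P + weightedShift e g) = 0) : φ = 0 := by
  have hT (x : E) : φ (x - P x + weightedShift e g x) = 0 := congr($hφ x)
  have he (m : ℕ) : φ (e m) = 0 := by
    have := hT (e (m + 1))
    rw [hPe, sub_self, zero_add, weightedShift_apply_succ hbi, map_smul, smul_eq_mul] at this
    exact (mul_eq_zero.1 this).resolve_left (by exact_mod_cast (shiftWeight_pos e g m).ne')
  have hker : closure (Submodule.span 𝕜 (Set.range e) : Set E) ⊆ LinearMap.ker (φ : E →ₗ[𝕜] 𝕜) :=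
    φ.isClosed_ker.closure_subset_iff.2 (Submodule.span_le.2 (Set.range_subset_iff.2 he))
  ext x
  have hPx : φ (P x) = 0 := hker (hPrange x)
  have hBx : φ (weightedShift e g x) = 0 := by
    rw [← comp_weightedShift_of_forall_apply_eq (g := g) hPe]
    exact hker (hPrange _)
  simpa [hPx, hBx] using hT x

end WeightedShift

theorem stmt8_general {X : Type*} [NormedAddCommGroup X] [NormedSpace ℂ X] [CompleteSpace X]
    (h : ∀ T : X →L[ℂ] X, frontier (spectrum ℂ T) ⊆ pointSpectrum (adj T))
    (N : Submodule ℂ X)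
    (hsep : TopologicalSpace.IsSeparable (N : Set X))
    (hinf : ¬ FiniteDimensional ℂ N) :
    ¬ Submodule.ClosedComplemented N := by
  rintro ⟨π, hπ⟩
  obtain ⟨e, g, heN, hbi, hdense⟩ := exists_biorthogonal_seq hsep hinf
  set P : X →L[ℂ] X := N.subtypeL ∘L π
  have hPe (n : ℕ) : P (e n) = e n := congrArg Subtype.val (hπ ⟨e n, heN n⟩)
  have hP : IsIdempotentElem P := ContinuousLinearMap.ext fun x => congrArg Subtype.val (hπ (π x))
  set T := 1 - P + weightedShift e g
  have he₀ : e 0 ≠ 0 := fun h => by simpa [h] using hbi 0 0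
  have h0 : (0 : ℂ) ∈ spectrum ℂ T := (spectrum.zero_mem_iff ℂ).2 fun hT =>
    he₀ <| (ContinuousLinearMap.isUnit_iff_bijective.1 hT).1 <| by
      simp [T, hPe, weightedShift_apply_zero hbi]
  obtain ⟨φ, hφ, hφT⟩ := h T <| ((Set.toFinite {0, 1}).subset
    (spectrum_one_sub_add_weightedShift_subset hP hPe hbi)).countable.subset_frontier ℂ h0
  refine hφ (eq_zero_of_comp_one_sub_add_weightedShift hPe hbi (fun x => hdense (π x).2) ?_)
  exact hφT.trans (zero_smul ℂ φ)

/-- If every bounded operator `T` on the complex Banach space `X` satisfies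
`∂σ(T) ⊆ σ_p(T*)`, then no infinite-dimensional separable closed subspace of `X` is
complemented (i.e. the range of a bounded projection). -/
theorem stmt8 {X : Type*} [NormedAddCommGroup X] [NormedSpace ℂ X] [CompleteSpace X]
    (h : ∀ T : X →L[ℂ] X, frontier (spectrum ℂ T) ⊆ pointSpectrum (adj T))
    (N : Submodule ℂ X) (hclosed : IsClosed (N : Set X))
    (hsep : TopologicalSpace.IsSeparable (N : Set X))
    (hinf : ¬ FiniteDimensional ℂ N) :
    ¬ Submodule.ClosedComplemented N :=
  stmt8_general h N hsep hinf

end JClassPaper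
end
end

section
/- Let X be a complex Banach space and T ∈ L(X). If δ(T) > 1 and ker T ≠ {0}, then T is J^mix-class; that is, there exists a non-zero x ∈ X with J^mix_T(x) = X. Moreover, already δ(T) > 1 alone implies J^mix_T(0) = X, i.e. for every y ∈ X there is a sequence (z_m) in X with z_m → 0 and T^m z_m → y. -/
open Filter Topology Metric
open scoped ENNReal

noncomputable section

namespace JClassPaper

variable {X : Type*} [NormedAddCommGroup X] [NormedSpace ℂ X]

/-!
Some power `T ^ N` has `s(T ^ N) > 1`, so it maps the unit ball onto a ball of radius `r > 1`;
iterating, every `y` has a `T ^ (N * q)`-preimage of norm at most `‖y‖ / r ^ q`. Applying at most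
`N` further powers of `T` to these preimages gives `z m` with `T ^ m (z m) = y` and `z m → 0`,
whence `J^mix_T(0) = X`. A nonzero `x ∈ ker T` is annihilated by every `T ^ m` with `m ≥ 1`, so
`J^mix_T(x) ⊇ J^mix_T(0)`.
-/

section

variable {E F : Type*} [NormedAddCommGroup E] [NormedSpace ℂ E] [NormedAddCommGroup F]
  [NormedSpace ℂ F]

lemma exists_apply_eq_norm_le_of_closedBall_subset {S : E →L[ℂ] F} {r : ℝ} (hr : 0 < r)
    (h : closedBall (0 : F) r ⊆ S '' closedBall 0 1) (w : F) :
    ∃ v, S v = w ∧ ‖v‖ ≤ ‖w‖ / r := by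
  rcases eq_or_ne w 0 with rfl | hw
  · exact ⟨0, map_zero S, by simp⟩
  have hw' : 0 < ‖w‖ := norm_pos_iff.2 hw
  have hmem : (r / ‖w‖) • w ∈ closedBall (0 : F) r := by
    rw [mem_closedBall_zero_iff, norm_smul, Real.norm_of_nonneg (by positivity),
      div_mul_cancel₀ _ hw'.ne']
  obtain ⟨v, hv, hSv⟩ := h hmem
  refine ⟨(‖w‖ / r) • v, ?_, ?_⟩
  · have hscale : ‖w‖ / r * (r / ‖w‖) = 1 := by field_simp
    rw [ContinuousLinearMap.map_smul_of_tower, hSv, smul_smul, hscale, one_smul]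
  · rw [norm_smul, Real.norm_of_nonneg (by positivity)]
    exact mul_le_of_le_one_right (by positivity) (mem_closedBall_zero_iff.1 hv)

lemma exists_pow_apply_eq_norm_le_of_closedBall_subset {S : E →L[ℂ] E} {r : ℝ} (hr : 0 < r)
    (h : closedBall (0 : E) r ⊆ S '' closedBall 0 1) (y : E) (q : ℕ) :
    ∃ w, (S ^ q) w = y ∧ ‖w‖ ≤ ‖y‖ / r ^ q := by
  induction q with
  | zero => exact ⟨y, rfl, by simp⟩
  | succ q ih =>
    obtain ⟨w, hw, hwy⟩ := ih
    obtain ⟨v, hv, hvw⟩ := exists_apply_eq_norm_le_of_closedBall_subset hr h w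
    refine ⟨v, by rw [pow_succ, mul_apply_eq_comp, hv, hw], ?_⟩
    calc ‖v‖ ≤ ‖w‖ / r := hvw
      _ ≤ ‖y‖ / r ^ q / r := by gcongr
      _ = ‖y‖ / r ^ (q + 1) := by rw [div_div, pow_succ]

lemma exists_tendsto_zero_pow_apply_eq_of_closedBall_subset {S : E →L[ℂ] E} {r : ℝ}
    (hr : 1 < r) (h : closedBall (0 : E) r ⊆ S '' closedBall 0 1) (y : E) :
    ∃ w : ℕ → E, Tendsto w atTop (𝓝 0) ∧ ∀ q, (S ^ q) (w q) = y := by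
  choose w hw hwy using exists_pow_apply_eq_norm_le_of_closedBall_subset (by linarith) h y
  refine ⟨w, ?_, hw⟩
  have hdecay : Tendsto (fun q : ℕ => ‖y‖ * r⁻¹ ^ q) atTop (𝓝 0) := by
    simpa using (tendsto_pow_atTop_nhds_zero_of_lt_one (by positivity)
      (inv_lt_one_of_one_lt₀ hr)).const_mul ‖y‖
  rw [tendsto_zero_iff_norm_tendsto_zero]
  refine squeeze_zero (fun q => norm_nonneg _) (fun q => ?_) hdecay
  simpa [inv_pow, div_eq_mul_inv] using hwy q

lemma tendsto_pow_apply_zero_of_le {ι : Type*} {l : Filter ι} (T : E →L[ℂ] E) {k : ι → ℕ}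
    {N : ℕ} (hk : ∀ i, k i ≤ N) {w : ι → E} (hw : Tendsto w l (𝓝 0)) :
    Tendsto (fun i => (T ^ k i) (w i)) l (𝓝 0) := by
  set C := ∑ j ∈ Finset.range (N + 1), ‖T ^ j‖
  have hbound : ∀ i, ‖(T ^ k i) (w i)‖ ≤ C * ‖w i‖ := fun i =>
    ((T ^ k i).le_opNorm (w i)).trans <| mul_le_mul_of_nonneg_right
      (Finset.single_le_sum (fun j _ => norm_nonneg (T ^ j))
        (Finset.mem_range_succ_iff.2 (hk i)))
      (norm_nonneg _)
  rw [tendsto_zero_iff_norm_tendsto_zero] at hw ⊢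
  exact squeeze_zero (fun i => norm_nonneg _) hbound (by simpa using hw.const_mul C)

lemma exists_tendsto_zero_pow_apply_eq_of_pow {T : E →L[ℂ] E} {N : ℕ} (hN : 0 < N) {y : E}
    {w : ℕ → E} (hw : Tendsto w atTop (𝓝 0)) (hwy : ∀ q, ((T ^ N) ^ q) (w q) = y) :
    ∃ z : ℕ → E, Tendsto z atTop (𝓝 0) ∧ ∀ m, (T ^ m) (z m) = y := by
  set q : ℕ → ℕ := fun m => m / N + 1
  have hq : Tendsto q atTop atTop :=
    (tendsto_add_atTop_nat 1).comp (Nat.tendsto_div_const_atTop hN.ne')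
  have hle : ∀ m, m ≤ N * q m := fun m => (Nat.lt_mul_div_succ m hN).le
  have hgap : ∀ m, N * q m - m ≤ N := fun m => by
    have := Nat.mul_div_le m N
    simp only [q, mul_add_one]
    omega
  refine ⟨fun m => (T ^ (N * q m - m)) (w (q m)),
    tendsto_pow_apply_zero_of_le T hgap (hw.comp hq), fun m => ?_⟩
  rw [← mul_apply_eq_comp, ← pow_add, Nat.add_sub_cancel' (hle m), pow_mul, hwy]

end

lemma jMixSet_zero_subset_of_apply_eq_zero {T : X →L[ℂ] X} {x : X} (hx : T x = 0) :
    JMixSet T 0 ⊆ JMixSet T x := by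
  rintro y ⟨u, hu, hTu⟩
  refine ⟨fun n => x + u n, by simpa using tendsto_const_nhds.add hu, hTu.congr' ?_⟩
  filter_upwards [eventually_ge_atTop 1] with n hn
  obtain ⟨k, rfl⟩ := Nat.exists_eq_add_of_le' hn
  have hTx : (T ^ (k + 1)) x = 0 := by rw [pow_succ, mul_apply_eq_comp, hx, map_zero]
  rw [map_add, hTx, zero_add]

lemma smod_nonneg (S : X →L[ℂ] X) : 0 ≤ smod S :=
  Real.sSup_nonneg fun _ hr => hr.1

lemma exists_one_lt_smod_pow {T : X →L[ℂ] X} (hd : 1 < dmod T) :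
    ∃ N, 0 < N ∧ 1 < smod (T ^ N) := by
  obtain ⟨n, hn⟩ := exists_lt_of_lt_ciSup hd
  refine ⟨n + 1, n.succ_pos, ?_⟩
  rcases (Real.one_lt_rpow_iff (smod_nonneg _)).1 hn with h | ⟨-, -, h⟩
  · exact h.1
  · exact absurd h (not_lt.2 (by positivity))

lemma exists_closedBall_subset_image_of_lt_smod {S : X →L[ℂ] X} {c : ℝ} (hc : 0 ≤ c)
    (h : c < smod S) : ∃ r, c < r ∧ closedBall (0 : X) r ⊆ S '' closedBall 0 1 := by
  have hne : {r : ℝ | 0 ≤ r ∧ closedBall (0 : X) r ⊆ S '' closedBall 0 1}.Nonempty := by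
    by_contra hempty
    rw [Set.not_nonempty_iff_eq_empty] at hempty
    rw [smod, hempty, Real.sSup_empty] at h
    exact hc.not_gt h
  obtain ⟨r, ⟨-, hr⟩, hcr⟩ := exists_lt_of_lt_csSup hne h
  exact ⟨r, hcr, hr⟩

lemma exists_tendsto_zero_pow_apply_eq {T : X →L[ℂ] X} (hd : 1 < dmod T) (y : X) :
    ∃ z : ℕ → X, Tendsto z atTop (𝓝 0) ∧ ∀ m, (T ^ m) (z m) = y := by
  obtain ⟨N, hN, hs⟩ := exists_one_lt_smod_pow hd
  obtain ⟨r, hr, hball⟩ := exists_closedBall_subset_image_of_lt_smod zero_le_one hs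
  obtain ⟨w, hw, hwy⟩ := exists_tendsto_zero_pow_apply_eq_of_closedBall_subset hr hball y
  exact exists_tendsto_zero_pow_apply_eq_of_pow hN hw hwy

theorem stmt9_general {X : Type*} [NormedAddCommGroup X] [NormedSpace ℂ X]
    (T : X →L[ℂ] X) (hd : 1 < dmod T) :
    JMixSet T 0 = Set.univ ∧
      (LinearMap.ker (T : X →ₗ[ℂ] X) ≠ ⊥ → ∃ x : X, x ≠ 0 ∧ JMixSet T x = Set.univ) := by
  have hzero : JMixSet T 0 = Set.univ := Set.eq_univ_of_forall fun y => by
    obtain ⟨z, hz, hzy⟩ := exists_tendsto_zero_pow_apply_eq hd y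
    exact ⟨z, hz, by simpa only [hzy] using tendsto_const_nhds⟩
  refine ⟨hzero, fun hker => ?_⟩
  obtain ⟨x, hx, hx0⟩ := Submodule.exists_mem_ne_zero_of_ne_bot hker
  exact ⟨x, hx0, Set.eq_univ_of_univ_subset (hzero ▸ jMixSet_zero_subset_of_apply_eq_zero hx)⟩

/-- If `δ(T) > 1`, then `J^mix_T(0) = X`; and if moreover `ker T ≠ {0}`, then
`T` is `J^mix`-class. -/
theorem stmt9 {X : Type*} [NormedAddCommGroup X] [NormedSpace ℂ X] [CompleteSpace X]
    (T : X →L[ℂ] X) (hd : 1 < dmod T) :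
    JMixSet T 0 = Set.univ ∧
      (LinearMap.ker (T : X →ₗ[ℂ] X) ≠ ⊥ → ∃ x : X, x ≠ 0 ∧ JMixSet T x = Set.univ) :=
  stmt9_general T hd

end JClassPaper
end
end

section
/- Let w = (w_n)_{n≥1} be a bounded sequence of positive reals and let B_w be the weighted backward shift on l∞. Then B_w is J-class if and only if r₂ := lim_n inf_k (w_k · w_{k+1} ⋯ w_{k+n-1})^{1/n} > 1. -/
/-!
Write `A n = inf_k w_k ⋯ w_{k+n-1}`. Since `A` is supermultiplicative, `r₂ > 1` exactly when
`A m > 1` for some `m ≥ 1`.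

If `J(x)` contains the constant sequence `‖x‖ + 3`, some `B^m u` with `‖u - x‖ < 1` is within `1`
of it; as `(B^m u)_j = w_j ⋯ w_{j+m-1} u_{j+m}`, every block product of length `m` is at least
`(‖x‖ + 2) / (‖x‖ + 1)`, so `A m > 1`.

Conversely, if `A m > 1`, every `y` has a preimage under `B^{qm}` of norm at most
`‖y‖ / A(m)^q`, while `B^{qm} e₀ = 0`; adding these preimages to `e₀` shows `J(e₀) = l∞`.
-/

open Filter Topology Metric
open scoped ENNReal

noncomputable section

namespace JClassPaper

variable {X : Type*} [NormedAddCommGroup X] [NormedSpace ℂ X]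

section Supermultiplicative

variable {a : ℕ → ℝ} {r : ℝ}

lemma pow_succ_le_of_supermul (h0 : ∀ n, 0 ≤ a n) (hmul : ∀ m n, a m * a n ≤ a (m + n))
    (m q : ℕ) : a m ^ (q + 1) ≤ a ((q + 1) * m) := by
  induction q with
  | zero => simp
  | succ q ih =>
    calc a m ^ (q + 1 + 1) = a m ^ (q + 1) * a m := pow_succ _ _
      _ ≤ a ((q + 1) * m) * a m := mul_le_mul_of_nonneg_right ih (h0 m)
      _ ≤ a ((q + 1) * m + m) := hmul _ _
      _ = a ((q + 1 + 1) * m) := by ring_nf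

lemma rpow_inv_le_of_supermul (h0 : ∀ n, 0 ≤ a n) (hmul : ∀ m n, a m * a n ≤ a (m + n))
    (ha : Tendsto (fun n : ℕ => a n ^ ((1 : ℝ) / n)) atTop (𝓝 r)) {m : ℕ} (hm : 0 < m) :
    a m ^ ((1 : ℝ) / m) ≤ r := by
  have hsub : Tendsto (fun q : ℕ => (q + 1) * m) atTop atTop :=
    tendsto_atTop_mono (fun q => Nat.le_mul_of_pos_right _ hm) (tendsto_add_atTop_nat 1)
  refine ge_of_tendsto (ha.comp hsub) (Eventually.of_forall fun q => ?_)
  calc a m ^ ((1 : ℝ) / m) = (a m ^ (q + 1)) ^ ((1 : ℝ) / ((q + 1) * m : ℕ)) := by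
        rw [← Real.rpow_natCast, ← Real.rpow_mul (h0 m)]
        congr 1
        push_cast
        field_simp
    _ ≤ a ((q + 1) * m) ^ ((1 : ℝ) / ((q + 1) * m : ℕ)) :=
        Real.rpow_le_rpow (pow_nonneg (h0 m) _) (pow_succ_le_of_supermul h0 hmul m q)
          (by positivity)

lemma one_lt_iff_exists_one_lt_of_supermul (h0 : ∀ n, 0 ≤ a n)
    (hmul : ∀ m n, a m * a n ≤ a (m + n))
    (ha : Tendsto (fun n : ℕ => a n ^ ((1 : ℝ) / n)) atTop (𝓝 r)) :
    1 < r ↔ ∃ m, 0 < m ∧ 1 < a m := by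
  constructor
  · intro hr
    obtain ⟨m, hm1, hm⟩ :=
      ((ha.eventually (eventually_gt_nhds hr)).and (eventually_gt_atTop 0)).exists
    refine ⟨m, hm, lt_of_not_ge fun hle => hm1.not_ge ?_⟩
    exact Real.rpow_le_one (h0 m) hle (one_div_nonneg.2 m.cast_nonneg)
  · rintro ⟨m, hm, ham⟩
    exact (Real.one_lt_rpow ham (by positivity)).trans_le (rpow_inv_le_of_supermul h0 hmul ha hm)

end Supermultiplicative

def blockInf (w : ℕ → ℝ) (n : ℕ) : ℝ := ⨅ k : ℕ, ∏ i ∈ Finset.range n, w (k + i)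

section BlockInf

variable {w : ℕ → ℝ}

lemma bddBelow_range_prod (hw : ∀ n, 0 ≤ w n) (n : ℕ) :
    BddBelow (Set.range fun k => ∏ i ∈ Finset.range n, w (k + i)) :=
  ⟨0, by rintro _ ⟨k, rfl⟩; exact Finset.prod_nonneg fun _ _ => hw _⟩

lemma blockInf_le_prod (hw : ∀ n, 0 ≤ w n) (n k : ℕ) :
    blockInf w n ≤ ∏ i ∈ Finset.range n, w (k + i) :=
  ciInf_le (bddBelow_range_prod hw n) k

lemma blockInf_nonneg (hw : ∀ n, 0 ≤ w n) (n : ℕ) : 0 ≤ blockInf w n :=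
  le_ciInf fun _ => Finset.prod_nonneg fun _ _ => hw _

lemma blockInf_mul_le (hw : ∀ n, 0 ≤ w n) (m n : ℕ) :
    blockInf w m * blockInf w n ≤ blockInf w (m + n) := by
  refine le_ciInf fun k => ?_
  rw [Finset.prod_range_add]
  simp only [← add_assoc]
  exact mul_le_mul (blockInf_le_prod hw m k) (blockInf_le_prod hw n (k + m))
    (blockInf_nonneg hw n) (Finset.prod_nonneg fun _ _ => hw _)

end BlockInf

lemma JSet.exists_pow_near {T : X →L[ℂ] X} {x y : X} (hy : y ∈ JSet T x) {ε : ℝ} (hε : 0 < ε)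
    (N : ℕ) : ∃ m ≥ N, ∃ u, dist u x < ε ∧ dist ((T ^ m) u) y < ε := by
  obtain ⟨k, hk, u, hu, hTu⟩ := hy
  obtain ⟨n, hnN, hux, hTuy⟩ := ((eventually_ge_atTop N).and
    ((hu.eventually (ball_mem_nhds x hε)).and (hTu.eventually (ball_mem_nhds y hε)))).exists
  exact ⟨k n, hnN.trans hk.le_apply, u n, hux, hTuy⟩

section WeightedShift

variable {w : ℕ → ℝ} {B : linf →L[ℂ] linf}
  (hB : ∀ (x : linf) (n : ℕ), (B x) n = (w n : ℂ) * x (n + 1))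
include hB

lemma weightedShift_pow_apply (k : ℕ) (x : linf) (n : ℕ) :
    ((B ^ k) x) n = (∏ i ∈ Finset.range k, (w (n + i) : ℂ)) * x (n + k) := by
  induction k generalizing x with
  | zero => simp
  | succ k ih =>
    rw [pow_succ, mul_apply_eq_comp, ih, hB, Finset.prod_range_succ, ← add_assoc, mul_assoc]

lemma norm_weightedShift_pow_apply_le (hw : ∀ n, 0 ≤ w n) (k : ℕ) (x : linf) (n : ℕ) :
    ‖((B ^ k) x) n‖ ≤ (∏ i ∈ Finset.range k, w (n + i)) * ‖x‖ := by
  have hprod : 0 ≤ ∏ i ∈ Finset.range k, w (n + i) := Finset.prod_nonneg fun _ _ => hw _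
  rw [weightedShift_pow_apply hB, norm_mul, ← Complex.ofReal_prod, Complex.norm_of_nonneg hprod]
  exact mul_le_mul_of_nonneg_left (lp.norm_apply_le_norm ENNReal.top_ne_zero x _) hprod

lemma weightedShift_pow_single_zero {k : ℕ} (hk : 0 < k) : (B ^ k) (lp.single ∞ 0 1) = 0 := by
  ext n
  rw [weightedShift_pow_apply hB, lp.single_apply_ne _ _ _ (by omega), mul_zero]
  rfl

lemma exists_weightedShift_pow_eq (hw : ∀ n, 0 < w n) {k : ℕ} (hk : 0 < blockInf w k)
    (y : linf) : ∃ v : linf, (B ^ k) v = y ∧ ‖v‖ ≤ ‖y‖ / blockInf w k := by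
  let f : ℕ → ℂ := fun j =>
    if k ≤ j then y (j - k) / ∏ i ∈ Finset.range k, (w (j - k + i) : ℂ) else 0
  have hf : ∀ j, ‖f j‖ ≤ ‖y‖ / blockInf w k := by
    intro j
    by_cases hj : k ≤ j
    · have hprod : 0 ≤ ∏ i ∈ Finset.range k, w (j - k + i) :=
        Finset.prod_nonneg fun _ _ => (hw _).le
      simp only [f, if_pos hj, norm_div, ← Complex.ofReal_prod, Complex.norm_of_nonneg hprod]
      exact div_le_div₀ (norm_nonneg y) (lp.norm_apply_le_norm ENNReal.top_ne_zero y _) hk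
        (blockInf_le_prod (fun n => (hw n).le) k _)
    · simp only [f, if_neg hj, norm_zero]
      positivity
  refine ⟨⟨f, memℓp_infty ⟨_, Set.forall_mem_range.2 hf⟩⟩, ?_,
    lp.norm_le_of_forall_le (by positivity) hf⟩
  ext n
  have hprod : ∏ i ∈ Finset.range k, (w (n + i) : ℂ) ≠ 0 :=
    Finset.prod_ne_zero_iff.2 fun i _ => Complex.ofReal_ne_zero.2 (hw _).ne'
  rw [weightedShift_pow_apply hB]
  change _ * f (n + k) = _
  simp only [f, if_pos (Nat.le_add_left k n), Nat.add_sub_cancel]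
  exact mul_div_cancel₀ _ hprod

lemma exists_one_lt_blockInf_of_jClass (hw : ∀ n, 0 ≤ w n) (hJ : JClass B) :
    ∃ m, 0 < m ∧ 1 < blockInf w m := by
  obtain ⟨x, -, hx⟩ := hJ
  set y : linf := ((‖x‖ + 3 : ℝ) : ℂ) • 1
  have hy : y ∈ JSet B x := hx ▸ Set.mem_univ y
  obtain ⟨m, hm, u, hux, hTuy⟩ := JSet.exists_pow_near hy one_pos 1
  have hu : ‖u‖ ≤ ‖x‖ + 1 := by
    have := norm_le_norm_add_norm_sub' u x
    rw [← dist_eq_norm] at this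
    linarith
  have hblock : ∀ j, (‖x‖ + 2) / (‖x‖ + 1) ≤ ∏ i ∈ Finset.range m, w (j + i) := by
    intro j
    have hyj : ‖y j‖ = ‖x‖ + 3 := by
      rw [lp.coeFn_smul, Pi.smul_apply, lp.infty_coeFn_one, Pi.one_apply, smul_eq_mul, mul_one,
        Complex.norm_of_nonneg (by positivity)]
    have hnear : ‖y j‖ - ‖((B ^ m) u) j‖ ≤ 1 :=
      calc ‖y j‖ - ‖((B ^ m) u) j‖ ≤ ‖(y - (B ^ m) u) j‖ := norm_sub_norm_le _ _
        _ ≤ ‖y - (B ^ m) u‖ := lp.norm_apply_le_norm ENNReal.top_ne_zero _ _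
        _ ≤ 1 := by rw [← dist_eq_norm, dist_comm]; exact hTuy.le
    rw [div_le_iff₀ (by positivity)]
    calc ‖x‖ + 2 ≤ ‖((B ^ m) u) j‖ := by linarith
      _ ≤ (∏ i ∈ Finset.range m, w (j + i)) * ‖u‖ := norm_weightedShift_pow_apply_le hB hw m u j
      _ ≤ (∏ i ∈ Finset.range m, w (j + i)) * (‖x‖ + 1) :=
        mul_le_mul_of_nonneg_left hu (Finset.prod_nonneg fun _ _ => hw _)
  refine ⟨m, hm, ?_⟩
  calc (1 : ℝ) < (‖x‖ + 2) / (‖x‖ + 1) := by rw [one_lt_div (by positivity)]; linarith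
    _ ≤ blockInf w m := le_ciInf hblock

lemma jClass_of_one_lt_blockInf (hw : ∀ n, 0 < w n) {m : ℕ} (hm : 0 < m)
    (hwm : 1 < blockInf w m) : JClass B := by
  have hw' : ∀ n, 0 ≤ w n := fun n => (hw n).le
  have hpow (q : ℕ) : blockInf w m ^ (q + 1) ≤ blockInf w ((q + 1) * m) :=
    pow_succ_le_of_supermul (blockInf_nonneg hw') (blockInf_mul_le hw') m q
  have hpow_pos (q : ℕ) : 0 < blockInf w m ^ (q + 1) := pow_pos (zero_lt_one.trans hwm) _
  have hsingle : lp.single ∞ 0 (1 : ℂ) ≠ (0 : linf) := by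
    intro h
    simpa using congrArg (fun v : linf => v 0) h
  refine ⟨lp.single ∞ 0 1, hsingle, Set.eq_univ_of_forall fun y => ?_⟩
  choose v hv hvnorm using fun q : ℕ =>
    exists_weightedShift_pow_eq hB hw ((hpow_pos q).trans_le (hpow q)) y
  refine ⟨fun q => (q + 1) * m, fun a b hab => by dsimp only; gcongr,
    fun q => lp.single ∞ 0 1 + v q, ?_, ?_⟩
  · have hlim : Tendsto (fun q : ℕ => ‖y‖ / blockInf w m ^ (q + 1)) atTop (𝓝 0) :=
      tendsto_const_nhds.div_atTop
        ((tendsto_pow_atTop_atTop_of_one_lt hwm).comp (tendsto_add_atTop_nat 1))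
    have hv0 : Tendsto v atTop (𝓝 0) := squeeze_zero_norm (fun q => (hvnorm q).trans
      (div_le_div_of_nonneg_left (norm_nonneg y) (hpow_pos q) (hpow q))) hlim
    simpa using tendsto_const_nhds.add hv0
  · refine tendsto_const_nhds.congr fun q => ?_
    rw [map_add, hv, weightedShift_pow_single_zero hB (by positivity), zero_add]

end WeightedShift

theorem stmt14_general (w : ℕ → ℝ) (hpos : ∀ n, 0 < w n)
    (B : linf →L[ℂ] linf)
    (hB : ∀ (x : linf) (n : ℕ), (B x) n = (w n : ℂ) * x (n + 1))
    (r₂ : ℝ)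
    (hr₂ : Tendsto
      (fun n : ℕ => (⨅ k : ℕ, ∏ i ∈ Finset.range n, w (k + i)) ^ ((1:ℝ)/n))
      atTop (𝓝 r₂)) :
    JClass B ↔ 1 < r₂ := by
  have hw : ∀ n, 0 ≤ w n := fun n => (hpos n).le
  rw [one_lt_iff_exists_one_lt_of_supermul (blockInf_nonneg hw) (blockInf_mul_le hw) hr₂]
  constructor
  · exact exists_one_lt_blockInf_of_jClass hB hw
  · rintro ⟨m, hm, hwm⟩
    exact jClass_of_one_lt_blockInf hB hpos hm hwm

/-- the weighted backward shift `B_w` on `l∞` is J-class iff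
`r₂ = lim_n inf_k (w_k ⋯ w_{k+n-1})^{1/n} > 1`. -/
theorem stmt14 (w : ℕ → ℝ) (hpos : ∀ n, 0 < w n) (hbd : ∃ C : ℝ, ∀ n, w n ≤ C)
    (B : linf →L[ℂ] linf)
    (hB : ∀ (x : linf) (n : ℕ), (B x) n = (w n : ℂ) * x (n + 1))
    (r₂ : ℝ)
    (hr₂ : Tendsto
      (fun n : ℕ => (⨅ k : ℕ, ∏ i ∈ Finset.range n, w (k + i)) ^ ((1:ℝ)/n))
      atTop (𝓝 r₂)) :
    JClass B ↔ 1 < r₂ :=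
  stmt14_general w hpos B hB r₂ hr₂

end JClassPaper
end
end

section
/- Let (w_n)_{n≥1} be a bounded sequence of positive reals and set m := liminf_n (∏_{k=1}^{n} w_k)^{1/n}, and assume m > 0. Suppose λ₀ ∈ ℂ and ε > 0 are such that the open disk K_ε(λ₀) := {λ : |λ − λ₀| < ε} is contained in K_m(0) := {λ : |λ| < m}. For λ ∈ K_ε(λ₀) define the sequence e_λ := (λⁿ/(w₁ w₂ ⋯ w_n))_{n≥1}; each e_λ belongs to c₀. Then the linear span of the set {e_λ : λ ∈ K_ε(λ₀)} is dense in c₀. -/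
/-!
Every `x ∈ c₀` is the norm limit of its truncations, so a functional `φ` on `ℓ∞` satisfies
`φ x = ∑ₙ xₙ φ(δₙ)` on `c₀`. Since `w₁⋯wₙ` eventually dominates `rⁿ` for every `r < m`, each `e_λ`
with `|λ| < m` lies in `c₀`, and `λ ↦ φ(e_λ) = ∑ₙ φ(δₙ) λⁿ⁺¹ / (w₁⋯wₙ₊₁)` is a power series of
radius at least `m`. If `φ` kills every `e_λ` with `λ ∈ K_ε(λ₀)`, the identity theorem makes this
series vanish identically, so every `φ(δₙ) = 0` and `φ` vanishes on `c₀`; Hahn–Banach then gives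
the density.
-/

open Filter Topology Metric
open scoped ENNReal

noncomputable section

section

variable {a : ℕ → ℝ}

theorem eventually_pow_lt_of_lt_liminf_root (ha : ∀ n, 0 ≤ a n) {r : ℝ} (hr : 0 ≤ r)
    (hrL : r < liminf (fun n : ℕ => a n ^ ((1:ℝ)/n)) atTop) :
    ∀ᶠ n in atTop, r ^ n < a n := by
  have hroot := eventually_lt_of_lt_liminf hrL
    (isBoundedUnder_of ⟨0, fun n => Real.rpow_nonneg (ha n) _⟩)
  filter_upwards [hroot, eventually_ne_atTop 0] with n hn hn0
  calc r ^ n < (a n ^ ((1:ℝ)/n)) ^ n := pow_lt_pow_left₀ hn hr hn0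
    _ = a n := by rw [one_div, Real.rpow_inv_natCast_pow (ha n) hn0]

theorem tendsto_pow_div_of_lt_liminf_root (ha : ∀ n, 0 < a n) {r : ℝ} (hr : 0 ≤ r)
    (hrL : r < liminf (fun n : ℕ => a n ^ ((1:ℝ)/n)) atTop) :
    Tendsto (fun n => r ^ n / a n) atTop (𝓝 0) := by
  obtain ⟨s, hrs, hsL⟩ := exists_between hrL
  have hs : 0 < s := hr.trans_lt hrs
  have hgeom : Tendsto (fun n => (r / s) ^ n) atTop (𝓝 0) :=
    tendsto_pow_atTop_nhds_zero_of_lt_one (by positivity) ((div_lt_one hs).2 hrs)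
  refine squeeze_zero' (.of_forall fun n => div_nonneg (pow_nonneg hr n) (ha n).le) ?_ hgeom
  filter_upwards [eventually_pow_lt_of_lt_liminf_root (fun n => (ha n).le) hs.le hsL] with n hn
  rw [div_pow]
  exact div_le_div_of_nonneg_left (pow_nonneg hr n) (pow_pos hs n) hn.le

theorem ofReal_liminf_root_le_radius_ofScalars (ha : ∀ n, 0 < a n) {c : ℕ → ℂ} {C : ℝ}
    (hc : ∀ n, ‖c n‖ ≤ C / a n) :
    ENNReal.ofReal (liminf (fun n : ℕ => a n ^ ((1:ℝ)/n)) atTop)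
      ≤ (FormalMultilinearSeries.ofScalars ℂ c).radius := by
  refine ENNReal.le_of_forall_nnreal_lt fun r hr => ?_
  have hrL : (r : ℝ) < liminf (fun n : ℕ => a n ^ ((1:ℝ)/n)) atTop := by
    simpa using ENNReal.toReal_lt_of_lt_ofReal hr
  refine FormalMultilinearSeries.le_radius_of_tendsto _ (l := 0) ?_
  have hlim := (tendsto_pow_div_of_lt_liminf_root ha r.2 hrL).const_mul C
  rw [mul_zero] at hlim
  refine squeeze_zero (fun n => by positivity) (fun n => ?_) hlim
  rw [FormalMultilinearSeries.ofScalars_norm]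
  calc ‖c n‖ * (r : ℝ) ^ n ≤ C / a n * (r : ℝ) ^ n := by gcongr; exact hc n
    _ = C * ((r : ℝ) ^ n / a n) := by ring

end

theorem eq_zero_of_hasSum_mul_pow_eq_zero {c : ℕ → ℂ} {R : ℝ}
    (hR : ENNReal.ofReal R ≤ (FormalMultilinearSeries.ofScalars ℂ c).radius)
    {U : Set ℂ} (hU : IsOpen U) {z₀ : ℂ} (hz₀ : z₀ ∈ U) (hUR : U ⊆ ball 0 R)
    (h : ∀ z ∈ U, HasSum (fun n => c n * z ^ n) 0) : c = 0 := by
  set p := FormalMultilinearSeries.ofScalars ℂ c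
  have hR0 : 0 < R := (norm_nonneg z₀).trans_lt (mem_ball_zero_iff.1 (hUR hz₀))
  have hp : HasFPowerSeriesOnBall p.sum p 0 p.radius :=
    p.hasFPowerSeriesOnBall ((ENNReal.ofReal_pos.2 hR0).trans_le hR)
  have hball : ball (0 : ℂ) R ⊆ Metric.eball 0 p.radius := by
    rw [← Metric.eball_ofReal]
    exact Metric.eball_subset_eball hR
  have hsum : Set.EqOn p.sum 0 U := fun z hz => by
    have := hp.hasSum (hball (hUR hz))
    simp only [zero_add, p, FormalMultilinearSeries.ofScalars_apply_eq, smul_eq_mul] at this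
    exact this.unique (h z hz)
  have hzero : Set.EqOn p.sum 0 (ball 0 R) :=
    (hp.analyticOnNhd.mono hball).eqOn_zero_of_preconnected_of_eventuallyEq_zero
      (convex_ball 0 R).isPreconnected (hUR hz₀) (hsum.eventuallyEq_of_mem (hU.mem_nhds hz₀))
  have hp0 : p = 0 := hp.hasFPowerSeriesAt.eq_zero_of_eventually
    (hzero.eventuallyEq_of_mem (ball_mem_nhds 0 hR0))
  exact (FormalMultilinearSeries.ofScalars_series_eq_zero ℂ).1 hp0

theorem Submodule.mem_of_forall_dual_eq_zero {𝕜 E : Type*} [RCLike 𝕜] [NormedAddCommGroup E]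
    [NormedSpace 𝕜 E] {S : Submodule 𝕜 E} (hS : IsClosed (S : Set E)) {x : E}
    (h : ∀ f : StrongDual 𝕜 E, (∀ y ∈ S, f y = 0) → f x = 0) : x ∈ S := by
  have := hS -- the quotient norm on `E ⧸ S` needs this instance
  by_contra hx
  obtain ⟨f, hf⟩ := SeparatingDual.exists_ne_zero (R := 𝕜)
    (mt (Submodule.Quotient.mk_eq_zero S).1 hx)
  exact hf (h (f.comp S.mkQL) fun y hy => by
    simp [(Submodule.Quotient.mk_eq_zero S).2 hy])

namespace JClassPaper

theorem isClosed_c0 : IsClosed (c0 : Set linf) := by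
  refine isClosed_of_closure_subset fun x hx => Metric.tendsto_atTop.2 fun δ hδ => ?_
  obtain ⟨y, hy, hxy⟩ := Metric.mem_closure_iff.1 hx (δ / 2) (half_pos hδ)
  obtain ⟨N, hN⟩ := Metric.tendsto_atTop.1 (show y ∈ c0 from hy) (δ / 2) (half_pos hδ)
  refine ⟨N, fun n hn => ?_⟩
  have hcoord : dist (x n) (y n) ≤ dist x y := by
    simpa [dist_eq_norm] using lp.norm_apply_le_norm ENNReal.top_ne_zero (x - y) n
  calc dist (x n) 0 ≤ dist (x n) (y n) + dist (y n) 0 := dist_triangle _ _ _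
    _ < δ / 2 + δ / 2 := add_lt_add_of_le_of_lt (hcoord.trans hxy.le) (hN n hn)
    _ = δ := add_halves δ

theorem hasSum_single_of_mem_c0 {x : linf} (hx : x ∈ c0) :
    HasSum (fun n => lp.single ∞ n (x n)) x := by
  refine Metric.tendsto_nhds.2 fun δ hδ => ?_
  obtain ⟨N, hN⟩ := Metric.tendsto_atTop.1 (show Tendsto (fun n => x n) atTop (𝓝 0) from hx)
    (δ / 2) (half_pos hδ)
  filter_upwards [eventually_ge_atTop (Finset.range N)] with s hs
  rw [dist_eq_norm]
  refine (lp.norm_le_of_forall_le (half_pos hδ).le fun n => ?_).trans_lt (half_lt_self hδ)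
  simp only [lp.coeFn_sub, lp.coeFn_sum, lp.coeFn_single, Pi.sub_apply, Finset.sum_apply,
    Finset.sum_pi_single]
  by_cases hn : n ∈ s
  · simpa [hn] using (half_pos hδ).le
  · have hNn : N ≤ n := by
      by_contra! h
      exact hn (hs (Finset.mem_range.2 h))
    simpa [hn] using (hN n hNn).le

theorem exists_mem_c0_coe_eq {x : ℕ → ℂ} (hx : Tendsto x atTop (𝓝 0)) :
    ∃ y ∈ c0, ⇑y = x :=
  ⟨⟨x, memℓp_infty_iff.2 hx.norm.bddAbove_range⟩, hx, rfl⟩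

theorem hasSum_dual_apply_of_mem_c0 (φ : StrongDual ℂ linf) {x : linf} (hx : x ∈ c0) :
    HasSum (fun n => x n * φ (lp.single ∞ n 1)) (φ x) := by
  refine ((hasSum_single_of_mem_c0 hx).mapL φ).congr_fun fun n => ?_
  rw [← smul_eq_mul, ← map_smul, ← lp.single_smul, smul_eq_mul, mul_one]

theorem norm_prod_ofReal_of_nonneg {ι : Type*} {w : ι → ℝ} (hw : ∀ i, 0 ≤ w i)
    (s : Finset ι) :
    ‖∏ i ∈ s, (w i : ℂ)‖ = ∏ i ∈ s, w i := by
  simp [norm_prod, abs_of_nonneg (hw _)]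

/-- The paper's `e_λ`, reindexed from `0` (`w 0` plays the role of `w₁`). -/
def weightedPow (w : ℕ → ℝ) (z : ℂ) (n : ℕ) : ℂ :=
  z ^ (n + 1) / ∏ i ∈ Finset.range (n + 1), (w i : ℂ)

section WeightedPowers

variable {w : ℕ → ℝ}

theorem tendsto_weightedPow (hw : ∀ n, 0 < w n) {z : ℂ}
    (hz : ‖z‖ < liminf (fun n : ℕ => (∏ k ∈ Finset.range n, w k) ^ ((1:ℝ)/n)) atTop) :
    Tendsto (weightedPow w z) atTop (𝓝 0) := by
  rw [tendsto_zero_iff_norm_tendsto_zero]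
  have := (tendsto_pow_div_of_lt_liminf_root (fun n => Finset.prod_pos fun i _ => hw i)
    (norm_nonneg z) hz).comp (tendsto_add_atTop_nat 1)
  simpa [Function.comp_def, weightedPow, norm_prod_ofReal_of_nonneg (fun i => (hw i).le)] using this

theorem dual_single_eq_zero_of_forall_weightedPow (hw : ∀ n, 0 < w n)
    (φ : StrongDual ℂ linf)
    {U : Set ℂ} (hU : IsOpen U) {z₀ : ℂ} (hz₀ : z₀ ∈ U)
    (hUL : U ⊆
      ball 0 (liminf (fun n : ℕ => (∏ k ∈ Finset.range n, w k) ^ ((1:ℝ)/n)) atTop))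
    (h : ∀ z ∈ U, ∀ y : linf, (∀ n, y n = weightedPow w z n) → φ y = 0) (n : ℕ) :
    φ (lp.single ∞ n 1) = 0 := by
  have hP : ∀ n, 0 < ∏ k ∈ Finset.range n, w k := fun n => Finset.prod_pos fun i _ => hw i
  -- the Taylor coefficients of `z ↦ φ (e_z)`
  let c : ℕ → ℂ
    | 0 => 0
    | n + 1 => φ (lp.single ∞ n 1) / ∏ i ∈ Finset.range (n + 1), (w i : ℂ)
  have hc : ∀ n, ‖c n‖ ≤ ‖φ‖ / ∏ k ∈ Finset.range n, w k := by
    rintro (_ | n)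
    · simp [c]
    · rw [norm_div, norm_prod_ofReal_of_nonneg (fun i => (hw i).le)]
      exact div_le_div_of_nonneg_right (by simpa using φ.le_opNorm (lp.single ∞ n 1)) (hP _).le
  have hsum : ∀ z ∈ U, HasSum (fun n => c n * z ^ n) 0 := by
    intro z hz
    obtain ⟨y, hy, hyz⟩ :=
      exists_mem_c0_coe_eq (tendsto_weightedPow hw (mem_ball_zero_iff.1 (hUL hz)))
    have := hasSum_dual_apply_of_mem_c0 φ hy
    rw [h z hz y (congrFun hyz), hyz] at this
    refine (hasSum_nat_add_iff' 1).1 ?_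
    simp only [Finset.sum_range_one, c, zero_mul, sub_zero]
    refine this.congr_fun fun k => ?_
    simp only [weightedPow]
    ring
  have hc0 := eq_zero_of_hasSum_mul_pow_eq_zero (ofReal_liminf_root_le_radius_ofScalars hP hc)
    hU hz₀ hUL hsum
  have hcn : c (n + 1) = 0 := congrFun hc0 (n + 1)
  exact (div_eq_zero_iff.1 hcn).resolve_right
    (Finset.prod_ne_zero_iff.2 fun i _ => Complex.ofReal_ne_zero.2 (hw i).ne')

end WeightedPowers

theorem stmt17_general (w : ℕ → ℝ) (hpos : ∀ n, 0 < w n)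
    (m : ℝ)
    (hm : m = Filter.liminf
      (fun n : ℕ => (∏ k ∈ Finset.range n, w k) ^ ((1:ℝ)/n)) atTop)
    (l0 : ℂ) (ε : ℝ) (hε : 0 < ε)
    (hsub : Metric.ball l0 ε ⊆ Metric.ball (0:ℂ) m) :
    (Submodule.span ℂ {y : linf | ∃ l ∈ Metric.ball l0 ε,
        ∀ n : ℕ, y n = l ^ (n + 1) / (∏ i ∈ Finset.range (n + 1), (w i : ℂ))}
      ).topologicalClosure = c0 := by
  subst hm
  apply le_antisymm
  · refine Submodule.topologicalClosure_minimal _ (Submodule.span_le.2 ?_) isClosed_c0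
    rintro y ⟨l, hl, hy⟩
    exact (tendsto_weightedPow hpos (mem_ball_zero_iff.1 (hsub hl))).congr fun n => (hy n).symm
  · intro x hx
    refine Submodule.mem_of_forall_dual_eq_zero (Submodule.isClosed_topologicalClosure _)
      fun φ hφ => ?_
    have hG : ∀ z ∈ ball l0 ε, ∀ y : linf, (∀ n, y n = weightedPow w z n) → φ y = 0 :=
      fun z hz y hy =>
        hφ y (Submodule.le_topologicalClosure _ (Submodule.subset_span ⟨z, hz, hy⟩))
    have hsingle := dual_single_eq_zero_of_forall_weightedPow hpos φ isOpen_ball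
      (mem_ball_self hε) hsub hG
    have hφx := hasSum_dual_apply_of_mem_c0 φ hx
    simp only [hsingle, mul_zero] at hφx
    exact hφx.unique hasSum_zero

/-- if `K_ε(λ₀) ⊆ K_m(0)` where `m = liminf_n (w₁⋯w_n)^{1/n} > 0`, then the
span of the vectors `e_λ = (λⁿ/(w₁⋯w_n))_{n≥1}`, `λ ∈ K_ε(λ₀)`, is dense in `c₀`. -/
theorem stmt17 (w : ℕ → ℝ) (hpos : ∀ n, 0 < w n) (hbd : ∃ C : ℝ, ∀ n, w n ≤ C)
    (m : ℝ)
    (hm : m = Filter.liminf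
      (fun n : ℕ => (∏ k ∈ Finset.range n, w k) ^ ((1:ℝ)/n)) atTop)
    (hm0 : 0 < m)
    (l0 : ℂ) (ε : ℝ) (hε : 0 < ε)
    (hsub : Metric.ball l0 ε ⊆ Metric.ball (0:ℂ) m) :
    (Submodule.span ℂ {y : linf | ∃ l ∈ Metric.ball l0 ε,
        ∀ n : ℕ, y n = l ^ (n + 1) / (∏ i ∈ Finset.range (n + 1), (w i : ℂ))}
      ).topologicalClosure = c0 :=
  stmt17_general w hpos m hm l0 ε hε hsub

end JClassPaper
end
end

section
/- Let X be a complex Banach space and T ∈ L(X) a J-class operator, and set A_T := {x ∈ X : J_T(x) = X}. Assume there exists a closed T-invariant subspace M ⊆ A_T such that A_T \ M ≠ ∅. Then the induced operator T̂ on the quotient Banach space X/M, defined by T̂[x] := [Tx], is J-class. -/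
open Filter Topology Metric
open scoped ENNReal

noncomputable section

namespace JClassPaper

variable {X : Type*} [NormedAddCommGroup X] [NormedSpace ℂ X]

theorem JSet_image_subset_of_semiconj {Y : Type*} [NormedAddCommGroup Y] [NormedSpace ℂ Y]
    {T : X →L[ℂ] X} {S : Y →L[ℂ] Y} {π : X →L[ℂ] Y} (h : Function.Semiconj π T S) (x : X) :
    π '' JSet T x ⊆ JSet S (π x) := by
  have hpow : ∀ n z, π ((T ^ n) z) = (S ^ n) (π z) := fun n z => by
    simpa only [FunLike.coe_pow_eq_iterate] using h.iterate_right n z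
  rintro _ ⟨y, ⟨k, hk, u, hu, hTu⟩, rfl⟩
  refine ⟨k, hk, fun n => π (u n), (π.continuous.tendsto x).comp hu, ?_⟩
  simpa only [Function.comp_def, hpow] using (π.continuous.tendsto y).comp hTu

theorem JSet_eq_univ_of_semiconj {Y : Type*} [NormedAddCommGroup Y] [NormedSpace ℂ Y]
    {T : X →L[ℂ] X} {S : Y →L[ℂ] Y} {π : X →L[ℂ] Y} (hπ : Function.Surjective π)
    (h : Function.Semiconj π T S) {x : X} (hx : JSet T x = Set.univ) :
    JSet S (π x) = Set.univ := by
  refine Set.eq_univ_of_univ_subset ?_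
  simpa [hx, Set.image_univ_of_surjective hπ] using JSet_image_subset_of_semiconj h x

theorem stmt18_general {X : Type*} [NormedAddCommGroup X] [NormedSpace ℂ X]
    (T : X →L[ℂ] X)
    (M : Submodule ℂ X) (hMclosed : IsClosed (M : Set X))
    (hne : ∃ x : X, JSet T x = Set.univ ∧ x ∉ M)
    (That : (X ⧸ M) →L[ℂ] (X ⧸ M))
    (hThat : ∀ x : X, That (Submodule.Quotient.mk x) = Submodule.Quotient.mk (T x)) :
    JClass That := by
  obtain ⟨x, hx, hxM⟩ := hne
  refine ⟨M.mkQ x, (Submodule.Quotient.mk_eq_zero M).not.mpr hxM, ?_⟩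
  exact JSet_eq_univ_of_semiconj (π := M.mkQL) M.mkQ_surjective (fun z => (hThat z).symm) hx

/-- if `T` is J-class and `M ⊆ A_T` is a closed `T`-invariant subspace with
`A_T \ M ≠ ∅`, then the induced operator `T̂` on `X/M` is J-class. -/
theorem stmt18 {X : Type*} [NormedAddCommGroup X] [NormedSpace ℂ X] [CompleteSpace X]
    (T : X →L[ℂ] X) (hT : JClass T)
    (M : Submodule ℂ X) (hMclosed : IsClosed (M : Set X))
    (hMinv : ∀ x ∈ M, T x ∈ M)
    (hMsub : (M : Set X) ⊆ {x : X | JSet T x = Set.univ})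
    (hne : ∃ x : X, JSet T x = Set.univ ∧ x ∉ M)
    (That : (X ⧸ M) →L[ℂ] (X ⧸ M))
    (hThat : ∀ x : X, That (Submodule.Quotient.mk x) = Submodule.Quotient.mk (T x)) :
    JClass That :=
  stmt18_general T M hMclosed hne That hThat

end JClassPaper
end
end
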